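/- arXiv:0901.3864 — 4 statements merged into one kernel-verified Lean document; each statement's English description precedes it below -/
import Mathlib

section
/- Suppose Γ : B → B is L-Lipschitz (condition (b)) for some positive bounded linear operator L, and let U′ ⊆ U be a closed convex subset of the unit ball such that Γ(U′) ⊆ U′. Then for every u₀ ∈ U′ the Cauchy problem u_t + u = Γ(u), u(0) = u₀ has a unique solution u(t), and u(t) ∈ U′ for every t ≥ 0. -/
/-!
Variation of constants turns `u' + u = Γ u, u 0 = u₀` into the fixed-point equation
`u t = exp (-t) • (u₀ + ∫₀ᵗ exp τ • Γ (u τ))`. Substituting `r = exp τ`, the right-hand side is a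
convex combination of `u₀` and an average of values of `Γ ∘ u`, so the Picard map preserves curves
with values in the closed convex `Γ`-invariant set `U'`. On `U'` the map `Γ` is `‖L‖`-Lipschitz,
so the `n`-th Picard iterate on `[0, T]` is `(‖L‖ T)ⁿ / n!`-Lipschitz, hence a contraction for
large `n`. Uniqueness is Grönwall's inequality for the field `Γ - id`, Lipschitz on `U'`; it also
lets the solutions on `[0, T]` be glued into a global one.
-/

open MeasureTheory Filter Set
open scoped NNReal ENNReal BigOperators Topology

/-- `u : ℝ → B` is a solution of `u_t + u = Γ(u)` on `[0,∞)`. -/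
def IsSol (Γ : BoundedContinuousFunction ℝ≥0 ℂ → BoundedContinuousFunction ℝ≥0 ℂ)
    (u : ℝ → BoundedContinuousFunction ℝ≥0 ℂ) : Prop :=
  ∀ t : ℝ, 0 ≤ t → HasDerivWithinAt u (Γ (u t) - u t) (Set.Ici 0) t

/-- The pointwise absolute value `|f|` of `f ∈ B`, as an element of `B`. -/
noncomputable def absB (f : BoundedContinuousFunction ℝ≥0 ℂ) :
    BoundedContinuousFunction ℝ≥0 ℂ :=
  BoundedContinuousFunction.ofNormedAddCommGroup (fun x => (‖f x‖ : ℂ))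
    (Complex.continuous_ofReal.comp f.continuous.norm) ‖f‖
    (fun x => by simpa using f.norm_coe_le_norm x)

/-- `f ∈ B` is a nonnegative (real-valued) function. -/
def NonnegF (f : BoundedContinuousFunction ℝ≥0 ℂ) : Prop :=
  ∀ x, (f x).im = 0 ∧ 0 ≤ (f x).re

section VariationOfConstants

open Real Nat Function

variable {E : Type*} [NormedAddCommGroup E] [NormedSpace ℝ E]
  {s : Set E} {Γ : E → E} {K : ℝ≥0} {x₀ : E}

theorem exists_isFixedPt_of_dist_iterate_le {X : Type*} [MetricSpace X] [CompleteSpace X]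
    [Nonempty X] {Φ : X → X} (C : ℝ)
    (h : ∀ n x y, dist (Φ^[n] x) (Φ^[n] y) ≤ C ^ n / n ! * dist x y) : ∃ x, IsFixedPt Φ x := by
  obtain ⟨n, hn⟩ := ((FloorSemiring.tendsto_pow_div_factorial_atTop C).eventually_lt_const
    one_pos).exists
  have hΦn : ContractingWith (C ^ n / n !).toNNReal Φ^[n] :=
    ⟨Real.toNNReal_lt_one.2 hn, LipschitzWith.of_dist_le_mul fun x y =>
      (h n x y).trans (mul_le_mul_of_nonneg_right (Real.le_coe_toNNReal _) dist_nonneg)⟩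
  exact ⟨_, hΦn.isFixedPt_fixedPoint_iterate⟩

theorem Convex.exp_neg_smul_add_integral_exp_smul_mem [CompleteSpace E] (hs : Convex ℝ s)
    (hsc : IsClosed s) {x : E} (hx : x ∈ s) {g : ℝ → E} (hg : Continuous g)
    (hgs : ∀ t, g t ∈ s) {τ : ℝ} (hτ : 0 ≤ τ) : exp (-τ) • (x + ∫ t in 0..τ, exp t • g t) ∈ s := by
  rcases hτ.eq_or_lt with rfl | hτ
  · simpa
  have h1 : 1 < exp τ := one_lt_exp_iff.2 hτ
  -- substituting `r = exp t` turns the integral into a multiple of this average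
  set m := ⨍ r in 1..exp τ, g (log r)
  have hm : m ∈ s := by
    refine hs.set_average_mem hsc ?_ ?_ (ae_of_all _ fun r => hgs _) ?_
    · simp [uIoc_of_le h1.le, hτ]
    · simp [uIoc_of_le h1.le]
    · rw [uIoc_of_le h1.le]
      exact ((hg.comp_continuousOn continuousOn_log).mono fun r hr =>
        (zero_lt_one.trans_le hr.1).ne').integrableOn_Icc.mono_set Ioc_subset_Icc_self
  have hint : ∫ t in 0..τ, exp t • g t = (exp τ - 1) • m := by
    rw [show m = _ from interval_average_eq _ _ _, smul_inv_smul₀ (by linarith), ← exp_zero,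
      ← intervalIntegral.integral_deriv_smul_comp_of_deriv_nonneg continuous_exp.continuousOn
        (fun t _ => hasDerivAt_exp t) (fun t _ => (exp_pos t).le)]
    simp
  have hconv : exp (-τ) • (x + (exp τ - 1) • m) = exp (-τ) • x + (1 - exp (-τ)) • m := by
    rw [smul_add, smul_smul, mul_sub, ← exp_add, neg_add_cancel, exp_zero, mul_one]
  rw [hint, hconv]
  exact hs hx hm (exp_pos _).le (by simp [hτ.le]) (by ring)

noncomputable def dampedPicard (Γ : E → E) (x₀ : E) (v : ℝ → E) (t : ℝ) : E :=
  exp (-t) • (x₀ + ∫ τ in 0..t, exp τ • Γ (v τ))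

theorem hasDerivAt_dampedPicard [CompleteSpace E] {v : ℝ → E}
    (hv : Continuous fun t => Γ (v t)) (t : ℝ) :
    HasDerivAt (dampedPicard Γ x₀ v) (Γ (v t) - dampedPicard Γ x₀ v t) t := by
  have hint : HasDerivAt (fun t => x₀ + ∫ τ in 0..t, exp τ • Γ (v τ)) (exp t • Γ (v t)) t :=
    ((continuous_exp.smul hv).integral_hasStrictDerivAt 0 t).hasDerivAt.const_add x₀
  refine (((hasDerivAt_neg t).exp).smul hint).congr_deriv ?_
  rw [dampedPicard, smul_smul, ← exp_add, neg_add_cancel, exp_zero, one_smul, mul_neg_one,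
    neg_smul, sub_eq_add_neg]

theorem norm_dampedPicard_sub_le {v w : ℝ → E} (hv : Continuous fun t => Γ (v t))
    (hw : Continuous fun t => Γ (w t)) {t : ℝ} (ht : 0 ≤ t) :
    ‖dampedPicard Γ x₀ v t - dampedPicard Γ x₀ w t‖ ≤ ∫ τ in 0..t, ‖Γ (v τ) - Γ (w τ)‖ := by
  have hsub : dampedPicard Γ x₀ v t - dampedPicard Γ x₀ w t
      = ∫ τ in 0..t, exp (τ - t) • (Γ (v τ) - Γ (w τ)) := by
    have hint {u : ℝ → E} (hu : Continuous fun t => Γ (u t)) :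
        IntervalIntegrable (fun τ => exp τ • Γ (u τ)) volume 0 t :=
      (continuous_exp.smul hu).intervalIntegrable _ _
    rw [dampedPicard, dampedPicard, ← smul_sub, add_sub_add_left_eq_sub,
      ← intervalIntegral.integral_sub (hint hv) (hint hw), ← intervalIntegral.integral_smul]
    congr 1 with τ
    rw [← smul_sub, smul_smul, ← exp_add, neg_add_eq_sub]
  rw [hsub]
  refine intervalIntegral.norm_integral_le_of_norm_le ht (ae_of_all _ fun τ hτ => ?_)
    ((hv.sub hw).norm.intervalIntegrable 0 t)
  rw [norm_smul, norm_of_nonneg (exp_pos _).le]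
  exact mul_le_of_le_one_left (norm_nonneg _) (exp_le_one_iff.2 (by linarith [hτ.2]))

theorem norm_dampedPicard_sub_le_of_le (hΓ : LipschitzOnWith K Γ s) {v w : ℝ → E}
    (hv : Continuous fun t => Γ (v t)) (hw : Continuous fun t => Γ (w t))
    (hvs : ∀ t, v t ∈ s) (hws : ∀ t, w t ∈ s) {n : ℕ} {D t : ℝ} (ht : 0 ≤ t)
    (hvw : ∀ τ ∈ Icc 0 t, ‖v τ - w τ‖ ≤ (K * τ) ^ n / n ! * D) :
    ‖dampedPicard Γ x₀ v t - dampedPicard Γ x₀ w t‖ ≤ (K * t) ^ (n + 1) / (n + 1)! * D := by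
  have hpoly : ∀ τ : ℝ, K * ((K * τ) ^ n / n ! * D) = (K ^ (n + 1) * D / n !) * τ ^ n :=
    fun τ => by ring
  calc _ ≤ ∫ τ in 0..t, ‖Γ (v τ) - Γ (w τ)‖ := norm_dampedPicard_sub_le hv hw ht
    _ ≤ ∫ τ in 0..t, K * ((K * τ) ^ n / n ! * D) := by
      refine intervalIntegral.integral_mono_on ht ((hv.sub hw).norm.intervalIntegrable _ _)
        ((by fun_prop : Continuous _).intervalIntegrable _ _) fun τ hτ => ?_
      exact (hΓ.norm_sub_le (hvs τ) (hws τ)).trans (mul_le_mul_of_nonneg_left (hvw τ hτ) K.2)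
    _ = (K * t) ^ (n + 1) / (n + 1)! * D := by
      simp_rw [hpoly]
      rw [intervalIntegral.integral_const_mul, integral_pow, factorial_succ]
      push_cast
      field_simp
      ring

theorem exists_eqOn_dampedPicard [CompleteSpace E] (hs : Convex ℝ s) (hsc : IsClosed s)
    (hΓs : MapsTo Γ s s) (hΓ : LipschitzOnWith K Γ s) (hx₀ : x₀ ∈ s) {T : ℝ} (hT : 0 ≤ T) :
    ∃ u : ℝ → E, Continuous u ∧ (∀ t, u t ∈ s) ∧ EqOn u (dampedPicard Γ x₀ u) (Icc 0 T) := by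
  let X := {v : C(Icc 0 T, E) // ∀ t, v t ∈ s}
  have hXc : IsClosed {v : C(Icc 0 T, E) | ∀ t, v t ∈ s} := by
    simp only [ofPred_forall]
    exact isClosed_iInter fun t => hsc.preimage (continuous_eval_const t)
  have : CompleteSpace X := hXc.completeSpace_coe
  have : Nonempty X := ⟨⟨ContinuousMap.const _ x₀, fun _ => hx₀⟩⟩
  let curve (v : X) : ℝ → E := IccExtend hT v.1
  have hcurve_mem (v : X) (t : ℝ) : curve v t ∈ s := v.2 _
  have hΓcurve (v : X) : Continuous fun t => Γ (curve v t) :=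
    hΓ.continuousOn.comp_continuous (v.1.continuous.Icc_extend' (h := hT)) (hcurve_mem v)
  let Φ (v : X) : X :=
    ⟨⟨fun t => dampedPicard Γ x₀ (curve v) t,
      (continuous_iff_continuousAt.2 fun t =>
        (hasDerivAt_dampedPicard (hΓcurve v) t).continuousAt).comp continuous_subtype_val⟩,
      fun t => hs.exp_neg_smul_add_integral_exp_smul_mem hsc hx₀ (hΓcurve v)
        (fun τ => hΓs (hcurve_mem v τ)) t.2.1⟩
  have hΦ (n : ℕ) (v w : X) (t : Icc 0 T) :
      dist ((Φ^[n] v).1 t) ((Φ^[n] w).1 t) ≤ (K * t) ^ n / n ! * dist v w := by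
    induction n generalizing t with
    | zero =>
      simpa using (ContinuousMap.dist_apply_le_dist t).trans_eq (Subtype.dist_eq v w).symm
    | succ n ih =>
      rw [iterate_succ_apply', iterate_succ_apply', dist_eq_norm]
      refine norm_dampedPicard_sub_le_of_le hΓ (hΓcurve _) (hΓcurve _) (hcurve_mem _) (hcurve_mem _)
        t.2.1 fun τ hτ => ?_
      have hτT : τ ∈ Icc 0 T := ⟨hτ.1, hτ.2.trans t.2.2⟩
      rw [← dist_eq_norm]
      simpa [curve, IccExtend_of_mem hT _ hτT] using ih ⟨τ, hτT⟩
  obtain ⟨v, hv⟩ := exists_isFixedPt_of_dist_iterate_le (Φ := Φ) (K * T) fun n v w =>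
    (ContinuousMap.dist_le (by positivity)).2 fun t =>
      (hΦ n v w t).trans (by gcongr; exacts [mul_nonneg K.2 t.2.1, t.2.2])
  refine ⟨curve v, v.1.continuous.Icc_extend', hcurve_mem v, fun t ht => ?_⟩
  conv_lhs => rw [← hv]
  simp [curve, Φ, IccExtend_of_mem hT _ ht]

theorem exists_hasDerivWithinAt_Icc [CompleteSpace E] (hs : Convex ℝ s) (hsc : IsClosed s)
    (hΓs : MapsTo Γ s s) (hΓ : LipschitzOnWith K Γ s) (hx₀ : x₀ ∈ s) {T : ℝ} (hT : 0 ≤ T) :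
    ∃ u : ℝ → E, u 0 = x₀ ∧ (∀ t, u t ∈ s) ∧
      ∀ t ∈ Icc 0 T, HasDerivWithinAt u (Γ (u t) - u t) (Icc 0 T) t := by
  obtain ⟨u, huc, hus, hu⟩ := exists_eqOn_dampedPicard hs hsc hΓs hΓ hx₀ hT
  refine ⟨u, by simpa [dampedPicard] using hu ⟨le_rfl, hT⟩, hus, fun t ht => ?_⟩
  have hΓu : Continuous fun t => Γ (u t) := hΓ.continuousOn.comp_continuous huc hus
  have h := (hasDerivAt_dampedPicard hΓu t).hasDerivWithinAt.congr hu (hu ht)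
  rwa [← hu ht] at h

theorem eqOn_Icc_of_hasDerivWithinAt (hΓ : LipschitzOnWith K Γ s) {u w : ℝ → E} {T : ℝ}
    (hu : ContinuousOn u (Icc 0 T))
    (hu' : ∀ t ∈ Ico 0 T, HasDerivWithinAt u (Γ (u t) - u t) (Ici t) t)
    (hus : ∀ t ∈ Ico 0 T, u t ∈ s) (hw : ContinuousOn w (Icc 0 T))
    (hw' : ∀ t ∈ Ico 0 T, HasDerivWithinAt w (Γ (w t) - w t) (Ici t) t)
    (hws : ∀ t ∈ Ico 0 T, w t ∈ s) (h0 : u 0 = w 0) : EqOn u w (Icc 0 T) :=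
  ODE_solution_unique_of_mem_Icc_right (v := fun _ x => Γ x - x)
    (fun _ _ => hΓ.sub LipschitzWith.id.lipschitzOnWith) hu hu' hus hw hw' hws h0

theorem eqOn_Ici_of_hasDerivWithinAt (hΓ : LipschitzOnWith K Γ s) {u w : ℝ → E}
    (hu : ∀ t, 0 ≤ t → HasDerivWithinAt u (Γ (u t) - u t) (Ici 0) t)
    (hus : ∀ t, 0 ≤ t → u t ∈ s)
    (hw : ∀ t, 0 ≤ t → HasDerivWithinAt w (Γ (w t) - w t) (Ici 0) t)
    (hws : ∀ t, 0 ≤ t → w t ∈ s) (h0 : u 0 = w 0) : EqOn u w (Ici 0) := fun t ht =>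
  eqOn_Icc_of_hasDerivWithinAt hΓ
    (fun r hr => (hu r hr.1).continuousWithinAt.mono Icc_subset_Ici_self)
    (fun r hr => (hu r hr.1).mono (Ici_subset_Ici.2 hr.1)) (fun r hr => hus r hr.1)
    (fun r hr => (hw r hr.1).continuousWithinAt.mono Icc_subset_Ici_self)
    (fun r hr => (hw r hr.1).mono (Ici_subset_Ici.2 hr.1)) (fun r hr => hws r hr.1)
    h0 (T := t) ⟨ht, le_rfl⟩

theorem exists_hasDerivWithinAt_Ici [CompleteSpace E] (hs : Convex ℝ s) (hsc : IsClosed s)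
    (hΓs : MapsTo Γ s s) (hΓ : LipschitzOnWith K Γ s) (hx₀ : x₀ ∈ s) :
    ∃ u : ℝ → E, u 0 = x₀ ∧ (∀ t, 0 ≤ t → u t ∈ s) ∧
      ∀ t, 0 ≤ t → HasDerivWithinAt u (Γ (u t) - u t) (Ici 0) t := by
  choose! sol hsol0 hsols hsol' using
    fun T (hT : 0 ≤ T) => exists_hasDerivWithinAt_Icc hs hsc hΓs hΓ hx₀ hT
  have hcompat {T T' r : ℝ} (hT : r < T) (hT' : r < T') (hr : 0 ≤ r) :
      sol T r = sol T' r := by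
    have hsolIci {T : ℝ} (hrT : r < T) :
        ∀ q ∈ Ico 0 r, HasDerivWithinAt (sol T) (Γ (sol T q) - sol T q) (Ici q) q :=
      fun q hq => (hsol' T (by linarith) q ⟨hq.1, by linarith [hq.2]⟩).mono_of_mem_nhdsWithin
        (Icc_mem_nhdsGE_of_mem ⟨hq.1, by linarith [hq.2]⟩)
    have hsolc {T : ℝ} (hrT : r < T) : ContinuousOn (sol T) (Icc 0 r) := fun q hq =>
      (hsol' T (by linarith) q ⟨hq.1, by linarith [hq.2]⟩).continuousWithinAt.mono
        (Icc_subset_Icc_right hrT.le)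
    exact eqOn_Icc_of_hasDerivWithinAt hΓ (hsolc hT) (hsolIci hT)
      (fun q _ => hsols T (by linarith) q) (hsolc hT') (hsolIci hT')
      (fun q _ => hsols T' (by linarith) q)
      ((hsol0 T (by linarith)).trans (hsol0 T' (by linarith)).symm) ⟨hr, le_rfl⟩
  refine ⟨fun t => sol (t + 1) t, by simpa using hsol0 1 zero_le_one,
    fun t ht => hsols _ (by linarith) t, fun t ht => ?_⟩
  have hglue : (fun r => sol (r + 1) r) =ᶠ[𝓝[Ici 0] t] sol (t + 1) := by
    filter_upwards [inter_mem_nhdsWithin (Ici 0) (Iio_mem_nhds (lt_add_one t))] with r hr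
    exact hcompat (lt_add_one r) hr.2 hr.1
  have hIcc : Icc 0 (t + 1) ∈ 𝓝[Ici 0] t :=
    inter_mem_nhdsWithin (Ici 0) (Iic_mem_nhds (lt_add_one t))
  exact ((hsol' (t + 1) (by linarith) t ⟨ht, by linarith⟩).mono_of_mem_nhdsWithin
    hIcc).congr_of_eventuallyEq hglue rfl

end VariationOfConstants

theorem lipschitzOnWith_of_norm_sub_le_re_absB
    {Γ : BoundedContinuousFunction ℝ≥0 ℂ → BoundedContinuousFunction ℝ≥0 ℂ}
    {L : BoundedContinuousFunction ℝ≥0 ℂ →L[ℂ] BoundedContinuousFunction ℝ≥0 ℂ}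
    (hb : ∀ u₁ u₂ : BoundedContinuousFunction ℝ≥0 ℂ, ‖u₁‖ ≤ 1 → ‖u₂‖ ≤ 1 →
      ∀ x : ℝ≥0, ‖Γ u₁ x - Γ u₂ x‖ ≤ ((L (absB (u₁ - u₂))) x).re) :
    LipschitzOnWith ‖L‖₊ Γ {u | ‖u‖ ≤ 1} := by
  refine LipschitzOnWith.of_dist_le_mul fun u₁ h₁ u₂ h₂ => ?_
  rw [dist_eq_norm, dist_eq_norm, coe_nnnorm]
  refine (BoundedContinuousFunction.norm_le (by positivity)).2 fun x => ?_
  calc ‖(Γ u₁ - Γ u₂) x‖ ≤ (L (absB (u₁ - u₂)) x).re := hb u₁ u₂ h₁ h₂ x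
    _ ≤ ‖L (absB (u₁ - u₂))‖ :=
      (Complex.re_le_norm _).trans (BoundedContinuousFunction.norm_coe_le_norm _ x)
    _ ≤ ‖L‖ * ‖absB (u₁ - u₂)‖ := L.le_opNorm _
    _ ≤ ‖L‖ * ‖u₁ - u₂‖ := mul_le_mul_of_nonneg_left
      (BoundedContinuousFunction.norm_ofNormedAddCommGroup_le _ (norm_nonneg _) _) (norm_nonneg _)

theorem stmt_3_general
    (Γ : BoundedContinuousFunction ℝ≥0 ℂ → BoundedContinuousFunction ℝ≥0 ℂ)
    (L : BoundedContinuousFunction ℝ≥0 ℂ →L[ℂ] BoundedContinuousFunction ℝ≥0 ℂ)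
    -- (b) Γ is L-Lipschitz on the unit ball U
    (hb : ∀ u₁ u₂ : BoundedContinuousFunction ℝ≥0 ℂ, ‖u₁‖ ≤ 1 → ‖u₂‖ ≤ 1 →
      ∀ x : ℝ≥0, ‖Γ u₁ x - Γ u₂ x‖ ≤ ((L (absB (u₁ - u₂))) x).re)
    -- U′ is a closed convex subset of the unit ball, invariant under Γ
    (U' : Set (BoundedContinuousFunction ℝ≥0 ℂ))
    (hU'sub : U' ⊆ {u | ‖u‖ ≤ 1}) (hU'closed : IsClosed U') (hU'conv : Convex ℝ U')
    (hU'inv : ∀ u ∈ U', Γ u ∈ U')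
    (u₀ : BoundedContinuousFunction ℝ≥0 ℂ) (hu₀ : u₀ ∈ U') :
    -- existence of a solution staying in U′ …
    (∃ u : ℝ → BoundedContinuousFunction ℝ≥0 ℂ,
      IsSol Γ u ∧ u 0 = u₀ ∧ ∀ t : ℝ, 0 ≤ t → u t ∈ U') ∧
    -- … unique in the class of solutions staying in U′
    (∀ u w : ℝ → BoundedContinuousFunction ℝ≥0 ℂ, IsSol Γ u → IsSol Γ w →
      (∀ t : ℝ, 0 ≤ t → u t ∈ U') → (∀ t : ℝ, 0 ≤ t → w t ∈ U') →
      u 0 = u₀ → w 0 = u₀ → ∀ t : ℝ, 0 ≤ t → u t = w t) := by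
  have hΓ : LipschitzOnWith ‖L‖₊ Γ U' :=
    (lipschitzOnWith_of_norm_sub_le_re_absB hb).mono hU'sub
  refine ⟨?_, fun u w hu hw hus hws hu0 hw0 t ht =>
    eqOn_Ici_of_hasDerivWithinAt hΓ hu hus hw hws (hu0.trans hw0.symm) ht⟩
  obtain ⟨u, hu0, hus, hu⟩ := exists_hasDerivWithinAt_Ici hU'conv hU'closed hU'inv hΓ hu₀
  exact ⟨u, hu, hu0, hus⟩

theorem stmt_3
    (Γ : BoundedContinuousFunction ℝ≥0 ℂ → BoundedContinuousFunction ℝ≥0 ℂ)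
    (L : BoundedContinuousFunction ℝ≥0 ℂ →L[ℂ] BoundedContinuousFunction ℝ≥0 ℂ)
    (hLpos : ∀ f, NonnegF f → NonnegF (L f))
    -- (b) Γ is L-Lipschitz on the unit ball U
    (hb : ∀ u₁ u₂ : BoundedContinuousFunction ℝ≥0 ℂ, ‖u₁‖ ≤ 1 → ‖u₂‖ ≤ 1 →
      ∀ x : ℝ≥0, ‖Γ u₁ x - Γ u₂ x‖ ≤ ((L (absB (u₁ - u₂))) x).re)
    -- U′ is a closed convex subset of the unit ball, invariant under Γ
    (U' : Set (BoundedContinuousFunction ℝ≥0 ℂ))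
    (hU'sub : U' ⊆ {u | ‖u‖ ≤ 1}) (hU'closed : IsClosed U') (hU'conv : Convex ℝ U')
    (hU'inv : ∀ u ∈ U', Γ u ∈ U')
    (u₀ : BoundedContinuousFunction ℝ≥0 ℂ) (hu₀ : u₀ ∈ U') :
    -- existence of a solution staying in U′ …
    (∃ u : ℝ → BoundedContinuousFunction ℝ≥0 ℂ,
      IsSol Γ u ∧ u 0 = u₀ ∧ ∀ t : ℝ, 0 ≤ t → u t ∈ U') ∧
    -- … unique in the class of solutions staying in U′
    (∀ u w : ℝ → BoundedContinuousFunction ℝ≥0 ℂ, IsSol Γ u → IsSol Γ w →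
      (∀ t : ℝ, 0 ≤ t → u t ∈ U') → (∀ t : ℝ, 0 ≤ t → w t ∈ U') →
      u 0 = u₀ → w 0 = u₀ → ∀ t : ℝ, 0 ≤ t → u t = w t) :=
  stmt_3_general Γ L hb U' hU'sub hU'closed hU'conv hU'inv u₀ hu₀
end

section
/- Assume N ≥ 2, α_N > 0, and K({0}) = 0. Then the spectral function μ is differentiable on (0,∞) and has at most one critical point: there is at most one p₀ ∈ (0,∞) with μ′(p₀) = 0. If such a p₀ exists, then μ(p₀) ≤ μ(p) for all p > 0 and μ is strictly decreasing on (0, p₀); if no critical point exists, μ is strictly decreasing on all of (0,∞). Consequently (setting p₀ = ∞ in the latter case), μ restricted to (0, p₀) is a strictly decreasing bijection onto (inf_{q>0} μ(q), +∞), and hence has a strictly decreasing inverse function p(·) : (inf_{q>0} μ(q), +∞) → (0, p₀). -/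
/- STATEMENT 8: For N ≥ 2, α_N > 0, K({0}) = 0: μ is differentiable on (0,∞) with at most one
critical point p₀; if p₀ exists it is the global minimum point and μ is strictly decreasing on
(0,p₀); otherwise μ is strictly decreasing on (0,∞). In either case μ restricted to (0,p₀)
(resp. (0,∞)) is a strictly decreasing bijection onto (inf_{q>0} μ(q), ∞), with strictly
decreasing inverse. -/

open MeasureTheory Filter Set
open scoped NNReal ENNReal BigOperators Topology

/-- The measure `K = Σₙ n αₙ Kₙ`, `Kₙ` the first marginal of `Aₙ` (arities `1,…,N`). -/
noncomputable def Kmeas {N : ℕ} (α : Fin N → ℝ)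
    (A : (n : Fin N) → Measure (Fin ((n : ℕ) + 1) → ℝ≥0)) : Measure ℝ≥0 :=
  ∑ n : Fin N, (((n : ℕ) + 1 : ℝ≥0∞) * ENNReal.ofReal (α n)) •
    ((A n).map (fun a => a 0))

/-- `λ(p) = ∫ a^p dK(a)`. -/
noncomputable def lamK (K : Measure ℝ≥0) (p : ℝ) : ℝ := ∫ a, (a : ℝ) ^ p ∂K

/-- The spectral function `μ(p) = (λ(p) − 1)/p`. -/
noncomputable def muK (K : Measure ℝ≥0) (p : ℝ) : ℝ := (lamK K p - 1) / p

/-! Differentiating under the integral, `μ'(p) = φ(p) / p²` with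
`φ(p) = ∫ (p a^p log a - a^p) dK(a) + 1`. For fixed `a > 0` the integrand has `p`-derivative
`p a^p (log a)² ≥ 0`, so `φ` is nondecreasing, and if `φ` took the same value twice then `K`
would be concentrated at `1`, where `φ ≡ 1 - K([0,∞)) < 0` (the mass of `K` is `Σ n αₙ > 1`).
So `μ` has at most one critical point, before which it decreases and after which it increases.
As `p → 0⁺`, `λ(p) → K([0,∞)) > 1`, hence `μ(p) → +∞`; this excludes `μ' > 0` in the case
without critical point (by Darboux, `μ'` then has constant sign), and with the intermediate
value theorem it makes `μ` onto `(inf μ, ∞)`. -/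

open Real

lemma StrictAntiOn.exists_strictAntiOn_rightInvOn {α β : Type*} [LinearOrder α] [LinearOrder β]
    [Nonempty α] {f : α → β} {s : Set α} {t : Set β} (hf : StrictAntiOn f s)
    (hft : SurjOn f s t) : ∃ g : β → α, StrictAntiOn g t ∧ ∀ m ∈ t, g m ∈ s ∧ f (g m) = m := by
  refine ⟨Function.invFunOn f s, fun m₁ h₁ m₂ h₂ hm => ?_, fun m hm => ⟨hft.mapsTo_invFunOn hm,
    hft.rightInvOn_invFunOn hm⟩⟩
  rwa [← hf.lt_iff_gt (hft.mapsTo_invFunOn h₁) (hft.mapsTo_invFunOn h₂),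
    hft.rightInvOn_invFunOn h₁, hft.rightInvOn_invFunOn h₂]

lemma exists_mem_Ioo_eq_of_tendsto_atTop {f : ℝ → ℝ} {a q m : ℝ} (haq : a < q)
    (hf : ContinuousOn f (Ioc a q)) (htop : Tendsto f (𝓝[>] a) atTop) (hm : f q < m) :
    ∃ x ∈ Ioo a q, f x = m := by
  obtain ⟨x, hmx, hx⟩ :=
    ((htop.eventually (eventually_gt_atTop m)).and (Ioo_mem_nhdsGT haq)).exists
  obtain ⟨y, hy, rfl⟩ := intermediate_value_Icc' hx.2.le (hf.mono (Icc_subset_Ioc hx.1 le_rfl))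
    ⟨hm.le, hmx.le⟩
  exact ⟨y, ⟨hx.1.trans_le hy.1, hy.2.lt_of_ne (by rintro rfl; exact hm.false)⟩, rfl⟩

lemma abs_rpow_mul_log_le {a t l u R : ℝ} (ha : 0 < a) (haR : a ≤ R) (hl : 0 < l)
    (hlt : l ≤ t) (htu : t ≤ u) : |a ^ t * log a| ≤ max (1 / l) (R ^ u * log R) := by
  rcases le_or_gt a 1 with ha1 | ha1
  · refine le_max_of_le_left ?_
    calc |a ^ t * log a| = a ^ t * |log a| := by
          rw [abs_mul, abs_of_nonneg (rpow_nonneg ha.le t)]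
      _ ≤ a ^ l * |log a| :=
          mul_le_mul_of_nonneg_right (rpow_le_rpow_of_exponent_ge ha ha1 hlt) (abs_nonneg _)
      _ = |log a * a ^ l| := by rw [abs_mul, abs_of_nonneg (rpow_nonneg ha.le l), mul_comm]
      _ ≤ 1 / l := (abs_log_mul_self_rpow_lt a l ha ha1 hl).le
  · refine le_max_of_le_right ?_
    rw [abs_of_nonneg (mul_nonneg (rpow_nonneg ha.le t) (log_nonneg ha1.le))]
    exact mul_le_mul ((rpow_le_rpow_of_exponent_le ha1.le htu).trans
      (rpow_le_rpow ha.le haR (by linarith))) (log_le_log ha haR) (log_nonneg ha1.le)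
      (rpow_nonneg (by linarith) u)

lemma rpow_le_max_one {a t R : ℝ} (ha : 0 ≤ a) (haR : a ≤ R) (ht₀ : 0 ≤ t) (ht₁ : t ≤ 1) :
    a ^ t ≤ max 1 R := by
  rcases le_or_gt a 1 with ha1 | ha1
  · exact le_max_of_le_left (rpow_le_one ha ha1 ht₀)
  · exact le_max_of_le_right ((rpow_le_rpow_of_exponent_le ha1.le ht₁).trans (by simpa using haR))

noncomputable def phiIntegrand (p a : ℝ) : ℝ := p * a ^ p * log a - a ^ p

lemma hasDerivAt_phiIntegrand {a : ℝ} (ha : 0 < a) (t : ℝ) :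
    HasDerivAt (phiIntegrand · a) (t * a ^ t * log a ^ 2) t := by
  have h := (hasStrictDerivAt_const_rpow ha t).hasDerivAt
  exact ((((hasDerivAt_id' t).mul h).mul_const (log a)).sub h).congr_deriv (by ring)

lemma monotoneOn_phiIntegrand {a : ℝ} (ha : 0 < a) : MonotoneOn (phiIntegrand · a) (Ici 0) := by
  refine monotoneOn_of_hasDerivWithinAt_nonneg (convex_Ici 0)
    (fun t _ => (hasDerivAt_phiIntegrand ha t).continuousAt.continuousWithinAt)
    (fun t _ => (hasDerivAt_phiIntegrand ha t).hasDerivWithinAt) fun t ht => ?_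
  rw [interior_Ici] at ht
  have : 0 < t := ht
  positivity

lemma strictMonoOn_phiIntegrand {a : ℝ} (ha : 0 < a) (ha1 : a ≠ 1) :
    StrictMonoOn (phiIntegrand · a) (Ici 0) := by
  refine strictMonoOn_of_hasDerivWithinAt_pos (convex_Ici 0)
    (fun t _ => (hasDerivAt_phiIntegrand ha t).continuousAt.continuousWithinAt)
    (fun t _ => (hasDerivAt_phiIntegrand ha t).hasDerivWithinAt) fun t ht => ?_
  rw [interior_Ici] at ht
  have : 0 < t := ht
  have : log a ≠ 0 := log_ne_zero_of_pos_of_ne_one ha ha1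
  positivity

noncomputable def phiK (K : Measure ℝ≥0) (p : ℝ) : ℝ := ∫ a, phiIntegrand p a ∂K + 1

lemma neg_one_le_muK (K : Measure ℝ≥0) {p : ℝ} (hp : 1 ≤ p) : -1 ≤ muK K p := by
  have hlam : 0 ≤ lamK K p := integral_nonneg fun a => rpow_nonneg a.2 p
  rw [muK, le_div_iff₀ (by linarith)]
  linarith

section SupportedOnIoc

variable {K : Measure ℝ≥0} [IsFiniteMeasure K] {R p q p₀ : ℝ}

lemma integrable_of_norm_le_on_Ioc (hK : ∀ᵐ a : ℝ≥0 ∂K, (a : ℝ) ∈ Ioc 0 R) {f : ℝ≥0 → ℝ}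
    (hf : AEStronglyMeasurable f K) {C : ℝ} (hC : ∀ a : ℝ≥0, (a : ℝ) ∈ Ioc 0 R → ‖f a‖ ≤ C) :
    Integrable f K :=
  (integrable_const C).mono' hf (hK.mono hC)

lemma integrable_rpow (hK : ∀ᵐ a : ℝ≥0 ∂K, (a : ℝ) ∈ Ioc 0 R) (hp : 0 ≤ p) :
    Integrable (fun a : ℝ≥0 => (a : ℝ) ^ p) K :=
  integrable_of_norm_le_on_Ioc hK (by measurability) fun a ha => by
    rw [Real.norm_of_nonneg (rpow_nonneg ha.1.le p)]
    exact rpow_le_rpow ha.1.le ha.2 hp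

lemma integrable_rpow_mul_log (hK : ∀ᵐ a : ℝ≥0 ∂K, (a : ℝ) ∈ Ioc 0 R) (hp : 0 < p) :
    Integrable (fun a : ℝ≥0 => (a : ℝ) ^ p * log a) K :=
  integrable_of_norm_le_on_Ioc hK (by measurability) fun a ha =>
    abs_rpow_mul_log_le ha.1 ha.2 hp le_rfl le_rfl

lemma integrable_phiIntegrand (hK : ∀ᵐ a : ℝ≥0 ∂K, (a : ℝ) ∈ Ioc 0 R) (hp : 0 < p) :
    Integrable (fun a : ℝ≥0 => phiIntegrand p a) K := by
  simp only [phiIntegrand, mul_assoc]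
  exact ((integrable_rpow_mul_log hK hp).const_mul p).sub (integrable_rpow hK hp.le)

lemma hasDerivAt_lamK (hK : ∀ᵐ a : ℝ≥0 ∂K, (a : ℝ) ∈ Ioc 0 R) (hp : 0 < p) :
    HasDerivAt (lamK K) (∫ a, (a : ℝ) ^ p * log a ∂K) p :=
  (hasDerivAt_integral_of_dominated_loc_of_deriv_le (F := fun t (a : ℝ≥0) => (a : ℝ) ^ t)
    (F' := fun t (a : ℝ≥0) => (a : ℝ) ^ t * log a)
    (Ioo_mem_nhds (half_lt_self hp) (lt_add_of_pos_right p (half_pos hp)))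
    (Eventually.of_forall fun t => (measurable_subtype_coe.pow_const t).aestronglyMeasurable)
    (integrable_rpow hK hp.le) (by measurability)
    (bound := fun _ => max (1 / (p / 2)) (R ^ (p + p / 2) * log R))
    (hK.mono fun a ha t ht => abs_rpow_mul_log_le ha.1 ha.2 (half_pos hp) ht.1.le ht.2.le)
    (integrable_const (μ := K) _)
    (hK.mono fun a ha t _ => (hasStrictDerivAt_const_rpow ha.1 t).hasDerivAt)).2

lemma tendsto_lamK_nhdsGT_zero (hK : ∀ᵐ a : ℝ≥0 ∂K, (a : ℝ) ∈ Ioc 0 R) :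
    Tendsto (lamK K) (𝓝[>] 0) (𝓝 (K.real univ)) := by
  have hlim : K.real univ = ∫ a, (a : ℝ) ^ (0 : ℝ) ∂K := by simp
  rw [hlim]
  refine tendsto_integral_filter_of_dominated_convergence (F := fun t (a : ℝ≥0) => (a : ℝ) ^ t)
    (fun _ => max 1 R)
    (Eventually.of_forall fun t => (measurable_subtype_coe.pow_const t).aestronglyMeasurable) ?_
    (integrable_const _) ?_
  · filter_upwards [Ioc_mem_nhdsGT zero_lt_one] with t ht
    filter_upwards [hK] with a ha
    rw [Real.norm_of_nonneg (rpow_nonneg ha.1.le t)]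
    exact rpow_le_max_one ha.1.le ha.2 ht.1.le ht.2
  · filter_upwards [hK] with a ha
    exact (continuousAt_const_rpow ha.1.ne').tendsto.mono_left nhdsWithin_le_nhds

lemma hasDerivAt_muK (hK : ∀ᵐ a : ℝ≥0 ∂K, (a : ℝ) ∈ Ioc 0 R) (hp : 0 < p) :
    HasDerivAt (muK K) (phiK K p / p ^ 2) p := by
  refine (((hasDerivAt_lamK hK hp).sub_const 1).div (hasDerivAt_id' p) hp.ne').congr_deriv ?_
  have hphi : phiK K p = p * ∫ a, (a : ℝ) ^ p * log a ∂K - lamK K p + 1 := by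
    simp only [phiK, phiIntegrand, mul_assoc, lamK]
    rw [integral_sub ((integrable_rpow_mul_log hK hp).const_mul p) (integrable_rpow hK hp.le),
      integral_const_mul]
  rw [hphi]
  ring

lemma tendsto_muK_nhdsGT_zero (hK : ∀ᵐ a : ℝ≥0 ∂K, (a : ℝ) ∈ Ioc 0 R) (hc : 1 < K.real univ) :
    Tendsto (muK K) (𝓝[>] 0) atTop := by
  have h := ((tendsto_lamK_nhdsGT_zero hK).sub_const 1).pos_mul_atTop (sub_pos.2 hc)
    tendsto_inv_nhdsGT_zero
  exact h.congr fun p => (div_eq_mul_inv _ _).symm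

lemma phiK_monotoneOn (hK : ∀ᵐ a : ℝ≥0 ∂K, (a : ℝ) ∈ Ioc 0 R) : MonotoneOn (phiK K) (Ioi 0) := by
  intro p hp q hq hpq
  refine add_le_add_left (integral_mono_ae (integrable_phiIntegrand hK hp)
    (integrable_phiIntegrand hK hq) (hK.mono fun a ha => ?_)) 1
  exact monotoneOn_phiIntegrand ha.1 (Ioi_subset_Ici_self hp) (Ioi_subset_Ici_self hq) hpq

lemma phiK_eq_one_sub_of_eq (hK : ∀ᵐ a : ℝ≥0 ∂K, (a : ℝ) ∈ Ioc 0 R) (hp : 0 < p) (hpq : p < q)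
    (h : phiK K p = phiK K q) : phiK K p = 1 - K.real univ := by
  have hq : 0 < q := hp.trans hpq
  have hint : ∫ a, (phiIntegrand q a - phiIntegrand p a) ∂K = 0 := by
    rw [integral_sub (integrable_phiIntegrand hK hq) (integrable_phiIntegrand hK hp)]
    simp only [phiK] at h
    linarith
  have hzero : (fun a : ℝ≥0 => phiIntegrand q a - phiIntegrand p a) =ᵐ[K] 0 :=
    (integral_eq_zero_iff_of_nonneg_ae (hK.mono fun a ha => sub_nonneg.2
      (monotoneOn_phiIntegrand ha.1 (mem_Ici.2 hp.le) (mem_Ici.2 hq.le) hpq.le))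
      ((integrable_phiIntegrand hK hq).sub (integrable_phiIntegrand hK hp))).1 hint
  -- the integrand is strictly increasing in `p` except at `a = 1`, so `K` is concentrated at `1`
  have hone : ∀ᵐ a : ℝ≥0 ∂K, phiIntegrand p a = -1 := by
    filter_upwards [hK, hzero] with a ha hfa
    have ha1 : (a : ℝ) = 1 := by
      by_contra hne
      exact (sub_pos.2 (strictMonoOn_phiIntegrand ha.1 hne (mem_Ici.2 hp.le) (mem_Ici.2 hq.le)
        hpq)).ne' hfa
    simp [phiIntegrand, ha1]
  rw [phiK, integral_congr_ae hone, integral_const, smul_eq_mul, mul_neg_one]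
  ring

lemma phiK_lt_phiK (hK : ∀ᵐ a : ℝ≥0 ∂K, (a : ℝ) ∈ Ioc 0 R) (hc : 1 < K.real univ)
    (hp : 0 < p) (hpq : p < q) (h₀ : phiK K p = 0 ∨ phiK K q = 0) : phiK K p < phiK K q := by
  refine (phiK_monotoneOn hK hp (hp.trans hpq) hpq.le).lt_of_ne fun h => ?_
  have := phiK_eq_one_sub_of_eq hK hp hpq h
  rcases h₀ with h₀ | h₀ <;> linarith

lemma continuousOn_muK (hK : ∀ᵐ a : ℝ≥0 ∂K, (a : ℝ) ∈ Ioc 0 R) : ContinuousOn (muK K) (Ioi 0) :=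
  fun _ hp => (hasDerivAt_muK hK hp).continuousAt.continuousWithinAt

lemma deriv_muK_eq_zero_iff (hK : ∀ᵐ a : ℝ≥0 ∂K, (a : ℝ) ∈ Ioc 0 R) (hp : 0 < p) :
    deriv (muK K) p = 0 ↔ phiK K p = 0 := by
  rw [(hasDerivAt_muK hK hp).deriv, div_eq_zero_iff, or_iff_left (pow_ne_zero 2 hp.ne')]

lemma eq_of_phiK_eq_zero (hK : ∀ᵐ a : ℝ≥0 ∂K, (a : ℝ) ∈ Ioc 0 R) (hc : 1 < K.real univ)
    (hp : 0 < p) (hq : 0 < q) (hp₀ : phiK K p = 0) (hq₀ : phiK K q = 0) : p = q := by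
  by_contra hne
  rcases lt_or_gt_of_ne hne with h | h
  · exact (phiK_lt_phiK hK hc hp h (Or.inl hp₀)).ne (hp₀.trans hq₀.symm)
  · exact (phiK_lt_phiK hK hc hq h (Or.inl hq₀)).ne (hq₀.trans hp₀.symm)

lemma strictAntiOn_muK_Ioc (hK : ∀ᵐ a : ℝ≥0 ∂K, (a : ℝ) ∈ Ioc 0 R) (hc : 1 < K.real univ)
    (h₀ : phiK K p₀ = 0) : StrictAntiOn (muK K) (Ioc 0 p₀) := by
  refine strictAntiOn_of_hasDerivWithinAt_neg (convex_Ioc 0 p₀)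
    ((continuousOn_muK hK).mono Ioc_subset_Ioi_self)
    (fun p hp => (hasDerivAt_muK hK (interior_subset hp).1).hasDerivWithinAt) fun p hp => ?_
  rw [interior_Ioc] at hp
  exact div_neg_of_neg_of_pos (h₀ ▸ phiK_lt_phiK hK hc hp.1 hp.2 (Or.inr h₀)) (pow_pos hp.1 2)

lemma strictMonoOn_muK_Ici (hK : ∀ᵐ a : ℝ≥0 ∂K, (a : ℝ) ∈ Ioc 0 R) (hc : 1 < K.real univ)
    (hp₀ : 0 < p₀) (h₀ : phiK K p₀ = 0) : StrictMonoOn (muK K) (Ici p₀) := by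
  refine strictMonoOn_of_hasDerivWithinAt_pos (convex_Ici p₀)
    ((continuousOn_muK hK).mono fun p hp => hp₀.trans_le hp)
    (fun p hp => (hasDerivAt_muK hK (hp₀.trans_le (interior_subset hp))).hasDerivWithinAt)
    fun p hp => ?_
  rw [interior_Ici] at hp
  have : 0 < p := hp₀.trans hp
  exact div_pos (h₀ ▸ phiK_lt_phiK hK hc hp₀ hp (Or.inl h₀)) (by positivity)

lemma isMinOn_muK (hK : ∀ᵐ a : ℝ≥0 ∂K, (a : ℝ) ∈ Ioc 0 R) (hc : 1 < K.real univ)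
    (hp₀ : 0 < p₀) (h₀ : phiK K p₀ = 0) : IsMinOn (muK K) (Ioi 0) p₀ := by
  intro p hp
  rcases le_total p p₀ with h | h
  · exact (strictAntiOn_muK_Ioc hK hc h₀).antitoneOn ⟨hp, h⟩ ⟨hp₀, le_rfl⟩ h
  · exact (strictMonoOn_muK_Ici hK hc hp₀ h₀).monotoneOn self_mem_Ici h h

lemma bijOn_muK_Ioo (hK : ∀ᵐ a : ℝ≥0 ∂K, (a : ℝ) ∈ Ioc 0 R) (hc : 1 < K.real univ)
    (hp₀ : 0 < p₀) (h₀ : phiK K p₀ = 0) :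
    BijOn (muK K) (Ioo 0 p₀) (Ioi (⨅ q : Ioi (0 : ℝ), muK K q)) := by
  have hanti := strictAntiOn_muK_Ioc hK hc h₀
  have hinf : (⨅ q : Ioi (0 : ℝ), muK K q) = muK K p₀ := (isMinOn_muK hK hc hp₀ h₀).iInf_eq hp₀
  rw [hinf]
  refine ⟨fun p hp => hanti ⟨hp.1, hp.2.le⟩ ⟨hp₀, le_rfl⟩ hp.2,
    hanti.injOn.mono Ioo_subset_Ioc_self, fun m hm => ?_⟩
  exact exists_mem_Ioo_eq_of_tendsto_atTop hp₀ ((continuousOn_muK hK).mono Ioc_subset_Ioi_self)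
    (tendsto_muK_nhdsGT_zero hK hc) hm

lemma strictAntiOn_muK_of_phiK_ne_zero (hK : ∀ᵐ a : ℝ≥0 ∂K, (a : ℝ) ∈ Ioc 0 R)
    (hc : 1 < K.real univ) (h : ∀ p ∈ Ioi (0 : ℝ), phiK K p ≠ 0) :
    StrictAntiOn (muK K) (Ioi 0) := by
  have hderiv : ∀ p ∈ interior (Ioi (0 : ℝ)),
      HasDerivWithinAt (muK K) (phiK K p / p ^ 2) (interior (Ioi 0)) p := fun p hp =>
    (hasDerivAt_muK hK (interior_subset hp)).hasDerivWithinAt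
  rcases hasDerivWithinAt_forall_lt_or_forall_gt_of_forall_ne (convex_Ioi 0).interior hderiv
    (m := 0) fun p hp => div_ne_zero (h p (interior_subset hp))
      (pow_ne_zero 2 (mem_Ioi.1 (interior_subset hp)).ne') with hneg | hpos
  · exact strictAntiOn_of_hasDerivWithinAt_neg (convex_Ioi 0) (continuousOn_muK hK) hderiv hneg
  · have hmono := strictMonoOn_of_hasDerivWithinAt_pos (convex_Ioi 0) (continuousOn_muK hK)
      hderiv hpos
    obtain ⟨p, h1p, hp⟩ := ((tendsto_muK_nhdsGT_zero hK hc).eventually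
      (eventually_gt_atTop (muK K 1))).and (Ioo_mem_nhdsGT one_pos) |>.exists
    exact absurd (hmono hp.1 (mem_Ioi.2 one_pos) hp.2) h1p.not_gt

lemma bijOn_muK_Ioi (hK : ∀ᵐ a : ℝ≥0 ∂K, (a : ℝ) ∈ Ioc 0 R) (hc : 1 < K.real univ)
    (h : ∀ p ∈ Ioi (0 : ℝ), phiK K p ≠ 0) :
    BijOn (muK K) (Ioi 0) (Ioi (⨅ q : Ioi (0 : ℝ), muK K q)) := by
  have hanti := strictAntiOn_muK_of_phiK_ne_zero hK hc h
  have hshift : ∀ p ∈ Ioi (0 : ℝ), p + 1 ∈ Ioi (0 : ℝ) ∧ muK K (p + 1) < muK K p := fun p hp =>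
    have hp1 : p + 1 ∈ Ioi (0 : ℝ) := mem_Ioi.2 (by linarith [mem_Ioi.1 hp])
    ⟨hp1, hanti hp hp1 (lt_add_one p)⟩
  have hbdd : BddBelow (range fun q : Ioi (0 : ℝ) => muK K q) := by
    refine ⟨-1, ?_⟩
    rintro _ ⟨⟨q, hq⟩, rfl⟩
    exact (neg_one_le_muK K (by linarith [mem_Ioi.1 hq])).trans (hshift q hq).2.le
  refine ⟨fun p hp => (ciInf_le hbdd ⟨p + 1, (hshift p hp).1⟩).trans_lt (hshift p hp).2,
    hanti.injOn, fun m hm => ?_⟩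
  obtain ⟨⟨q, hq⟩, hqm⟩ := exists_lt_of_ciInf_lt (mem_Ioi.1 hm)
  obtain ⟨x, hx, rfl⟩ := exists_mem_Ioo_eq_of_tendsto_atTop hq
    ((continuousOn_muK hK).mono Ioc_subset_Ioi_self) (tendsto_muK_nhdsGT_zero hK hc) hqm
  exact ⟨x, hx.1, rfl⟩

end SupportedOnIoc

section Kmeas

variable {N : ℕ} (α : Fin N → ℝ) (A : (n : Fin N) → Measure (Fin ((n : ℕ) + 1) → ℝ≥0))

lemma Kmeas_apply {s : Set ℝ≥0} (hs : MeasurableSet s) :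
    Kmeas α A s =
      ∑ n : Fin N, ((n : ℕ) + 1 : ℝ≥0∞) * ENNReal.ofReal (α n) * A n ((fun a => a 0) ⁻¹' s) := by
  simp only [Kmeas, Measure.coe_finsetSum, Finset.sum_apply, Measure.smul_apply, smul_eq_mul]
  exact Finset.sum_congr rfl fun n _ => by rw [Measure.map_apply (measurable_pi_apply 0) hs]

lemma Kmeas_apply_univ (hprob : ∀ n, IsProbabilityMeasure (A n)) :
    Kmeas α A univ = ∑ n : Fin N, ((n : ℕ) + 1 : ℝ≥0∞) * ENNReal.ofReal (α n) := by
  simp [Kmeas_apply α A MeasurableSet.univ]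

lemma isFiniteMeasure_Kmeas (hprob : ∀ n, IsProbabilityMeasure (A n)) :
    IsFiniteMeasure (Kmeas α A) :=
  ⟨by rw [Kmeas_apply_univ α A hprob]; exact ENNReal.sum_lt_top.2 fun n _ => by finiteness⟩

lemma Kmeas_real_univ (hα : ∀ n, 0 ≤ α n) (hprob : ∀ n, IsProbabilityMeasure (A n)) :
    (Kmeas α A).real univ = ∑ n : Fin N, ((n : ℕ) + 1 : ℝ) * α n := by
  rw [measureReal_def, Kmeas_apply_univ α A hprob, ENNReal.toReal_sum fun n _ => by finiteness]
  refine Finset.sum_congr rfl fun n _ => ?_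
  rw [ENNReal.toReal_mul, ENNReal.toReal_ofReal (hα n)]
  norm_cast

lemma one_lt_Kmeas_real_univ {i : Fin N} (hi : 0 < (i : ℕ)) (hα : ∀ n, 0 ≤ α n)
    (hsum : ∑ n, α n = 1) (hαi : 0 < α i) (hprob : ∀ n, IsProbabilityMeasure (A n)) :
    1 < (Kmeas α A).real univ := by
  have hpos : 0 < ((i : ℕ) : ℝ) * α i := mul_pos (by exact_mod_cast hi) hαi
  have hle : ((i : ℕ) : ℝ) * α i ≤ ∑ n : Fin N, ((n : ℕ) : ℝ) * α n :=
    Finset.single_le_sum (f := fun n : Fin N => (n : ℝ) * α n)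
      (fun n _ => mul_nonneg n.1.cast_nonneg (hα n)) (Finset.mem_univ i)
  have hsplit : ∑ n : Fin N, ((n : ℕ) + 1 : ℝ) * α n =
      ∑ n, α n + ∑ n : Fin N, ((n : ℕ) : ℝ) * α n := by
    rw [← Finset.sum_add_distrib]
    exact Finset.sum_congr rfl fun n _ => by ring
  rw [Kmeas_real_univ α A hα hprob, hsplit, hsum]
  linarith

lemma ae_Kmeas_mem_Ioc (hcomp : ∀ n, ∃ R : ℝ≥0, (A n) {a | ∃ k, R < a k} = 0)
    (hzero : Kmeas α A {0} = 0) : ∃ R : ℝ, ∀ᵐ a : ℝ≥0 ∂Kmeas α A, (a : ℝ) ∈ Ioc 0 R := by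
  choose Rn hRn using hcomp
  have htail : Kmeas α A (Ioi (∑ n, Rn n)) = 0 := by
    rw [Kmeas_apply α A measurableSet_Ioi]
    refine Finset.sum_eq_zero fun n _ => ?_
    refine mul_eq_zero_of_right _ (measure_mono_null ?_ (hRn n))
    intro a ha
    refine ⟨0, ?_⟩
    exact (Finset.single_le_sum (f := Rn) (fun _ _ => zero_le) (Finset.mem_univ n)).trans_lt ha
  refine ⟨∑ n, Rn n, ?_⟩
  filter_upwards [measure_eq_zero_iff_ae_notMem.1 hzero, measure_eq_zero_iff_ae_notMem.1 htail]
    with a h0 hR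
  exact ⟨by exact_mod_cast pos_iff_ne_zero.2 h0, by exact_mod_cast not_lt.1 hR⟩

end Kmeas

theorem stmt_8 (N : ℕ) (hN : 2 ≤ N) (α : Fin N → ℝ) (hα : ∀ n, 0 ≤ α n)
    (hsum : ∑ n, α n = 1)
    (hlast : 0 < α ⟨N - 1, by omega⟩)
    (A : (n : Fin N) → Measure (Fin ((n : ℕ) + 1) → ℝ≥0))
    (hprob : ∀ n, IsProbabilityMeasure (A n))
    (hcomp : ∀ n, ∃ R : ℝ≥0, (A n) {a | ∃ k, R < a k} = 0)
    (hzero : Kmeas α A {0} = 0) :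
    (∀ p ∈ Set.Ioi (0 : ℝ), DifferentiableAt ℝ (muK (Kmeas α A)) p) ∧
    -- at most one critical point
    (∀ p₁ ∈ Set.Ioi (0 : ℝ), ∀ p₂ ∈ Set.Ioi (0 : ℝ),
      deriv (muK (Kmeas α A)) p₁ = 0 → deriv (muK (Kmeas α A)) p₂ = 0 → p₁ = p₂) ∧
    -- if a critical point p₀ exists: global minimum, strict decrease on (0,p₀),
    -- and μ is a strictly decreasing bijection from (0,p₀) onto (inf μ, ∞)
    (∀ p₀ ∈ Set.Ioi (0 : ℝ), deriv (muK (Kmeas α A)) p₀ = 0 →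
      (∀ p ∈ Set.Ioi (0 : ℝ), muK (Kmeas α A) p₀ ≤ muK (Kmeas α A) p) ∧
      StrictAntiOn (muK (Kmeas α A)) (Set.Ioo 0 p₀) ∧
      Set.BijOn (muK (Kmeas α A)) (Set.Ioo 0 p₀)
        (Set.Ioi (⨅ q : Set.Ioi (0 : ℝ), muK (Kmeas α A) q)) ∧
      ∃ P : ℝ → ℝ, StrictAntiOn P (Set.Ioi (⨅ q : Set.Ioi (0 : ℝ), muK (Kmeas α A) q)) ∧
        ∀ m ∈ Set.Ioi (⨅ q : Set.Ioi (0 : ℝ), muK (Kmeas α A) q),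
          P m ∈ Set.Ioo 0 p₀ ∧ muK (Kmeas α A) (P m) = m) ∧
    -- if no critical point exists: strict decrease on (0,∞), and μ is a strictly
    -- decreasing bijection from (0,∞) onto (inf μ, ∞)
    ((∀ p ∈ Set.Ioi (0 : ℝ), deriv (muK (Kmeas α A)) p ≠ 0) →
      StrictAntiOn (muK (Kmeas α A)) (Set.Ioi 0) ∧
      Set.BijOn (muK (Kmeas α A)) (Set.Ioi 0)
        (Set.Ioi (⨅ q : Set.Ioi (0 : ℝ), muK (Kmeas α A) q)) ∧
      ∃ P : ℝ → ℝ, StrictAntiOn P (Set.Ioi (⨅ q : Set.Ioi (0 : ℝ), muK (Kmeas α A) q)) ∧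
        ∀ m ∈ Set.Ioi (⨅ q : Set.Ioi (0 : ℝ), muK (Kmeas α A) q),
          P m ∈ Set.Ioi 0 ∧ muK (Kmeas α A) (P m) = m) := by
  have := isFiniteMeasure_Kmeas α A hprob
  obtain ⟨R, hK⟩ := ae_Kmeas_mem_Ioc α A hcomp hzero
  have hc : 1 < (Kmeas α A).real univ :=
    one_lt_Kmeas_real_univ α A (i := ⟨N - 1, by omega⟩) (show 0 < N - 1 by omega) hα hsum hlast
      hprob
  refine ⟨fun p hp => (hasDerivAt_muK hK hp).differentiableAt, fun p₁ hp₁ p₂ hp₂ h₁ h₂ =>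
    eq_of_phiK_eq_zero hK hc hp₁ hp₂ ((deriv_muK_eq_zero_iff hK hp₁).1 h₁)
      ((deriv_muK_eq_zero_iff hK hp₂).1 h₂), fun p₀ hp₀ h₀ => ?_, fun h => ?_⟩
  · rw [deriv_muK_eq_zero_iff hK hp₀] at h₀
    have hanti := (strictAntiOn_muK_Ioc hK hc h₀).mono Ioo_subset_Ioc_self
    have hbij := bijOn_muK_Ioo hK hc hp₀ h₀
    exact ⟨isMinOn_iff.1 (isMinOn_muK hK hc hp₀ h₀), hanti, hbij,
      hanti.exists_strictAntiOn_rightInvOn hbij.surjOn⟩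
  · have hphi : ∀ p ∈ Ioi (0 : ℝ), phiK (Kmeas α A) p ≠ 0 := fun p hp =>
      (deriv_muK_eq_zero_iff hK hp).not.1 (h p hp)
    have hanti := strictAntiOn_muK_of_phiK_ne_zero hK hc hphi
    have hbij := bijOn_muK_Ioi hK hc hphi
    exact ⟨hanti, hbij, hanti.exists_strictAntiOn_rightInvOn hbij.surjOn⟩
end

section
/- Suppose Γ satisfies conditions (a) and (b) with L of the integral form, that Γ(1) = 1 (where 1 denotes the constant function equal to one), and let μ ∈ ℝ and p > 0 satisfy μ(p) < μ. Then the constant function w ≡ 1 is the unique continuous solution of the integral equation w(x) = ∫₀¹ Γ(w)(x τ^μ) dτ in the class of functions with ‖w‖ ≤ 1 and w = 1 + O(x^p). Equivalently, if there exists a non-constant continuous solution w of this equation with ‖w‖ = 1 and w = 1 + O(x^p) for some p > 0, then μ ≤ μ(p). -/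
/-! Write `e = w - 1`. Since `Γ 1 = 1`, the Lipschitz bound turns `|e(x)| ≤ D x^p` into
`|Γ w (y) - 1| ≤ D λ(p) y^p`, and averaging over `y = τ^μ x`, with
`∫₀¹ τ^(μ p) dτ = 1/(μ p + 1)`, gives back `|e(x)| ≤ D λ(p)/(μ p + 1) · x^p`. The hypothesis `μ(p) < μ` says exactly that
`q = λ(p)/(μ p + 1) < 1`, so iterating from `|e(x)| ≤ C x^p` gives `|e(x)| ≤ C qⁿ x^p → 0`. -/

open MeasureTheory Filter Set
open scoped NNReal ENNReal BigOperators Topology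

lemma lamK_nonneg (K : Measure ℝ≥0) (p : ℝ) : 0 ≤ lamK K p :=
  integral_nonneg fun a => Real.rpow_nonneg a.2 p

lemma integrable_coe_rpow_of_measure_gt_eq_zero {K : Measure ℝ≥0} [IsFiniteMeasure K]
    {R : ℝ≥0} (hR : K {a | R < a} = 0) {p : ℝ} (hp : 0 ≤ p) :
    Integrable (fun a : ℝ≥0 => (a : ℝ) ^ p) K := by
  refine Integrable.mono' (integrable_const ((R : ℝ) ^ p)) (by fun_prop) ?_
  have haeR : ∀ᵐ a ∂K, a ≤ R := by simpa [ae_iff, not_le] using hR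
  filter_upwards [haeR] with a haR
  rw [Real.norm_of_nonneg (by positivity)]
  exact Real.rpow_le_rpow a.2 haR hp

lemma setIntegral_Ioo_zero_one_rpow {r : ℝ} (hr : -1 < r) :
    ∫ τ in Ioo (0 : ℝ) 1, τ ^ r = 1 / (r + 1) := by
  rw [← integral_Ioc_eq_integral_Ioo, ← intervalIntegral.integral_of_le zero_le_one,
    integral_rpow (Or.inl hr), Real.one_rpow, Real.zero_rpow (by linarith)]
  ring

section FixedPoint

variable {Γ : BoundedContinuousFunction ℝ≥0 ℂ → BoundedContinuousFunction ℝ≥0 ℂ}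
  {K : Measure ℝ≥0} {w : BoundedContinuousFunction ℝ≥0 ℂ} {p D : ℝ}

lemma norm_apply_sub_one_le_of_lipschitz
    (hb : ∀ u₁ u₂ : BoundedContinuousFunction ℝ≥0 ℂ, ‖u₁‖ ≤ 1 → ‖u₂‖ ≤ 1 →
      ∀ x : ℝ≥0, ‖Γ u₁ x - Γ u₂ x‖ ≤ ∫ a, ‖u₁ (a * x) - u₂ (a * x)‖ ∂K)
    (hone : Γ 1 = 1) (hw : ‖w‖ ≤ 1) (hint : Integrable (fun a : ℝ≥0 => (a : ℝ) ^ p) K)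
    (hD : ∀ x : ℝ≥0, ‖w x - 1‖ ≤ D * (x : ℝ) ^ p) (y : ℝ≥0) :
    ‖Γ w y - 1‖ ≤ D * lamK K p * (y : ℝ) ^ p := by
  have hΓ : ‖Γ w y - 1‖ ≤ ∫ a, ‖w (a * y) - 1‖ ∂K := by
    simpa [hone] using hb w 1 hw (by simp) y
  refine hΓ.trans (le_of_le_of_eq (integral_mono_of_nonneg
    (ae_of_all _ fun a => norm_nonneg _) (hint.const_mul (D * (y : ℝ) ^ p))
    (ae_of_all _ fun a => (hD (a * y)).trans_eq ?_)) ?_)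
  · rw [NNReal.coe_mul, Real.mul_rpow a.coe_nonneg y.coe_nonneg]
    ring
  · rw [integral_const_mul, lamK]
    ring

lemma norm_apply_sub_one_le_of_average {m E : ℝ} (hmp : -1 < m * p)
    (heq : ∀ x : ℝ≥0, w x = ∫ τ in Ioo (0 : ℝ) 1, Γ w (Real.toNNReal (τ ^ m) * x))
    (hE : ∀ y : ℝ≥0, ‖Γ w y - 1‖ ≤ E * (y : ℝ) ^ p) (x : ℝ≥0) :
    ‖w x - 1‖ ≤ E / (m * p + 1) * (x : ℝ) ^ p := by
  have hint : IntegrableOn (fun τ : ℝ => Γ w (Real.toNNReal (τ ^ m) * x)) (Ioo 0 1) :=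
    Integrable.mono' (integrable_const ‖Γ w‖) (by fun_prop)
      (ae_of_all _ fun τ => (Γ w).norm_coe_le_norm _)
  have hsub : w x - 1 = ∫ τ in Ioo (0 : ℝ) 1, (Γ w (Real.toNNReal (τ ^ m) * x) - 1) := by
    rw [integral_sub hint (integrable_const 1), ← heq x]
    simp
  have hpow : ∀ τ ∈ Ioo (0 : ℝ) 1,
      ((Real.toNNReal (τ ^ m) * x : ℝ≥0) : ℝ) ^ p = (x : ℝ) ^ p * τ ^ (m * p) := by
    intro τ hτ
    rw [NNReal.coe_mul, Real.coe_toNNReal _ (Real.rpow_nonneg hτ.1.le m),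
      Real.mul_rpow (Real.rpow_nonneg hτ.1.le m) x.coe_nonneg, ← Real.rpow_mul hτ.1.le, mul_comm]
  calc ‖w x - 1‖
      ≤ ∫ τ in Ioo (0 : ℝ) 1, ‖Γ w (Real.toNNReal (τ ^ m) * x) - 1‖ :=
        hsub ▸ norm_integral_le_integral_norm _
    _ ≤ ∫ τ in Ioo (0 : ℝ) 1, E * (x : ℝ) ^ p * τ ^ (m * p) := by
        refine integral_mono_of_nonneg (ae_of_all _ fun τ => norm_nonneg _)
          (((intervalIntegral.integrableOn_Ioo_rpow_iff zero_lt_one).mpr hmp).const_mul _) ?_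
        filter_upwards [ae_restrict_mem measurableSet_Ioo] with τ hτ
        rw [mul_assoc, ← hpow τ hτ]
        exact hE _
    _ = E / (m * p + 1) * (x : ℝ) ^ p := by
        rw [integral_const_mul, setIntegral_Ioo_zero_one_rpow hmp]
        ring

end FixedPoint

lemma nonpos_of_forall_le_mul_pow {y C q : ℝ} (hq₀ : 0 ≤ q) (hq₁ : q < 1)
    (h : ∀ n : ℕ, y ≤ C * q ^ n) : y ≤ 0 := by
  have := (tendsto_pow_atTop_nhds_zero_of_lt_one hq₀ hq₁).const_mul C
  rw [mul_zero] at this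
  exact ge_of_tendsto this (Eventually.of_forall h)

theorem stmt_14_general
    (Γ : BoundedContinuousFunction ℝ≥0 ℂ → BoundedContinuousFunction ℝ≥0 ℂ)
    (K : Measure ℝ≥0) (hKfin : IsFiniteMeasure K)
    (hKcomp : ∃ R : ℝ≥0, K {a | R < a} = 0)
    -- (b) Γ is L-Lipschitz with L of integral form
    (hb : ∀ u₁ u₂ : BoundedContinuousFunction ℝ≥0 ℂ, ‖u₁‖ ≤ 1 → ‖u₂‖ ≤ 1 →
      ∀ x : ℝ≥0, ‖Γ u₁ x - Γ u₂ x‖ ≤ ∫ a, ‖u₁ (a * x) - u₂ (a * x)‖ ∂K)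
    -- Γ(1) = 1
    (hone : Γ 1 = 1)
    (m : ℝ) (p : ℝ) (hp : 0 < p) (hμp : muK K p < m) :
    ∀ w : BoundedContinuousFunction ℝ≥0 ℂ, ‖w‖ ≤ 1 →
      (∃ C > (0 : ℝ), ∀ x : ℝ≥0, ‖w x - 1‖ ≤ C * (x : ℝ) ^ p) →
      (∀ x : ℝ≥0, w x = ∫ τ in Set.Ioo (0 : ℝ) 1, Γ w (Real.toNNReal (τ ^ m) * x)) →
      w = 1 := by
  rintro w hw ⟨C, -, hC⟩ heq
  obtain ⟨R, hR⟩ := hKcomp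
  have hint := integrable_coe_rpow_of_measure_gt_eq_zero hR hp.le
  have hlt : lamK K p < m * p + 1 := by
    linarith [(div_lt_iff₀ hp).mp hμp]
  have hmp : -1 < m * p := by linarith [lamK_nonneg K p]
  set q := lamK K p / (m * p + 1)
  have hq₀ : 0 ≤ q := div_nonneg (lamK_nonneg K p) (by linarith)
  have hq₁ : q < 1 := (div_lt_one (by linarith)).mpr hlt
  have hiter : ∀ n : ℕ, ∀ x : ℝ≥0, ‖w x - 1‖ ≤ C * q ^ n * (x : ℝ) ^ p := by
    intro n
    induction n with
    | zero => simpa using hC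
    | succ n ih =>
      intro x
      refine (norm_apply_sub_one_le_of_average hmp heq
        (norm_apply_sub_one_le_of_lipschitz hb hone hw hint ih) x).trans_eq ?_
      ring
  ext x
  have := nonpos_of_forall_le_mul_pow (C := C * (x : ℝ) ^ p) hq₀ hq₁
    fun n => (hiter n x).trans_eq (by ring)
  simpa [sub_eq_zero] using norm_le_zero_iff.mp this

theorem stmt_14
    (Γ : BoundedContinuousFunction ℝ≥0 ℂ → BoundedContinuousFunction ℝ≥0 ℂ)
    (K : Measure ℝ≥0) (hKfin : IsFiniteMeasure K)
    (hKcomp : ∃ R : ℝ≥0, K {a | R < a} = 0)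
    -- (a) Γ maps U into itself
    (ha : ∀ u : BoundedContinuousFunction ℝ≥0 ℂ, ‖u‖ ≤ 1 → ‖Γ u‖ ≤ 1)
    -- (b) Γ is L-Lipschitz with L of integral form
    (hb : ∀ u₁ u₂ : BoundedContinuousFunction ℝ≥0 ℂ, ‖u₁‖ ≤ 1 → ‖u₂‖ ≤ 1 →
      ∀ x : ℝ≥0, ‖Γ u₁ x - Γ u₂ x‖ ≤ ∫ a, ‖u₁ (a * x) - u₂ (a * x)‖ ∂K)
    -- Γ(1) = 1
    (hone : Γ 1 = 1)
    (m : ℝ) (p : ℝ) (hp : 0 < p) (hμp : muK K p < m) :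
    ∀ w : BoundedContinuousFunction ℝ≥0 ℂ, ‖w‖ ≤ 1 →
      (∃ C > (0 : ℝ), ∀ x : ℝ≥0, ‖w x - 1‖ ≤ C * (x : ℝ) ^ p) →
      (∀ x : ℝ≥0, w x = ∫ τ in Set.Ioo (0 : ℝ) 1, Γ w (Real.toNNReal (τ ^ m) * x)) →
      w = 1 :=
  stmt_14_general Γ K hKfin hKcomp hb hone m p hp hμp
end

section
/- Let G be a nonnegative Lebesgue-integrable function on [0,1] with ∫₀¹ G(s) ds = 1 and ∫₀¹ G(s) s(1−s) ds > 0, and define λ(p) = ∫₀¹ G(s) (s^p + (1−s)^p) ds and μ(p) = (λ(p) − 1)/p for p > 0. Then: lim_{p→0⁺} p μ(p) = 1; lim_{p→∞} μ(p) = 0; μ(p) > 0 for 0 < p < 1; μ(1) = 0; μ(p) < 0 for p > 1; and μ(2) = μ(3) = −∫₀¹ G(s) s(1−s) ds. Consequently, the unique critical point p₀ of μ (which is its global minimum point) lies in the open interval (2,3). -/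
/- STATEMENT 19: Spectral function of the elastic Maxwell–Boltzmann model:
G ≥ 0 integrable on [0,1] with ∫G = 1 and ∫G s(1−s) ds > 0,
λ(p) = ∫₀¹ G(s)(s^p + (1−s)^p) ds, μ(p) = (λ(p)−1)/p. Then p μ(p) → 1 as p → 0⁺,
μ(p) → 0 as p → ∞, μ > 0 on (0,1), μ(1) = 0, μ < 0 on (1,∞),
μ(2) = μ(3) = −∫₀¹ G(s) s(1−s) ds, and the unique critical (global minimum) point p₀ of μ
lies in (2,3). -/

open MeasureTheory Filter Set
open scoped NNReal ENNReal BigOperators Topology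

/-- `λ(p) = ∫₀¹ G(s) (s^p + (1−s)^p) ds`. -/
noncomputable def lamG (G : ℝ → ℝ) (p : ℝ) : ℝ :=
  ∫ s in Set.Icc (0 : ℝ) 1, G s * (s ^ p + (1 - s) ^ p)

/-- The spectral function `μ(p) = (λ(p) − 1)/p`. -/
noncomputable def muG (G : ℝ → ℝ) (p : ℝ) : ℝ := (lamG G p - 1) / p

/-!
For `0 < p < 1` the integrand `s ^ p + (1 - s) ^ p - 1` of `λ(p) - 1` is positive on `(0, 1)`,
for `p > 1` it is negative, and for `p = 2, 3` it equals `-p s (1 - s)`; dominated convergence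
gives the limits. Differentiating under the integral sign, `p² μ'(p) = p λ'(p) - (λ(p) - 1)` has
derivative `p λ''(p)`, and `λ''(p) = ∫ G(s) (s^p log² s + (1-s)^p log² (1-s)) ds > 0`. Hence
`p² μ'(p)` is strictly increasing on `(0, ∞)`: `μ'` vanishes at most once and changes sign from
`-` to `+` there, and Rolle's theorem on `[2, 3]`, where `μ(2) = μ(3)`, produces that zero.
-/

open Real

lemma abs_rpow_mul_log_pow_le {s t : ℝ} (k : ℕ) (hs₀ : 0 ≤ s) (hs₁ : s ≤ 1) (ht : 0 < t) :
    |s ^ t * log s ^ k| ≤ (k / t) ^ k := by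
  rcases hs₀.eq_or_lt with rfl | hs₀
  · simp [zero_rpow ht.ne']
    positivity
  rcases Nat.eq_zero_or_pos k with rfl | hk
  · simpa [abs_of_nonneg (rpow_nonneg hs₀.le t)] using rpow_le_one hs₀.le hs₁ ht.le
  have htk : 0 < t / k := by positivity
  calc |s ^ t * log s ^ k| = |log s * s ^ (t / k)| ^ k := by
        rw [← abs_pow, mul_pow, ← rpow_mul_natCast hs₀.le, div_mul_cancel₀ _ (by positivity)]
        ring_nf
    _ ≤ (1 / (t / k)) ^ k := by
        gcongr
        exact (abs_log_mul_self_rpow_lt s _ hs₀ hs₁ htk).le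
    _ = (k / t) ^ k := by rw [one_div_div]

lemma hasDerivAt_const_rpow_of_nonneg {s t : ℝ} (hs : 0 ≤ s) (ht : 0 < t) :
    HasDerivAt (fun p : ℝ => s ^ p) (s ^ t * log s) t := by
  rcases hs.eq_or_lt with rfl | hs
  -- `0 ^ p = 0` near `t > 0`, and the junk value `log 0 = 0` makes the claimed derivative `0`
  · have h : (fun p : ℝ => (0 : ℝ) ^ p) =ᶠ[𝓝 t] fun _ => 0 := by
      filter_upwards [eventually_gt_nhds ht] with p hp using zero_rpow hp.ne'
    simpa using (hasDerivAt_const t (0 : ℝ)).congr_of_eventuallyEq h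
  · exact (hasStrictDerivAt_const_rpow hs t).hasDerivAt

lemma hasDerivAt_rpow_mul_log_pow {s t : ℝ} (k : ℕ) (hs : 0 ≤ s) (ht : 0 < t) :
    HasDerivAt (fun p : ℝ => s ^ p * log s ^ k) (s ^ t * log s ^ (k + 1)) t := by
  simpa only [pow_succ, mul_assoc, mul_comm (log s)] using
    (hasDerivAt_const_rpow_of_nonneg hs ht).mul_const (log s ^ k)

lemma integral_pos_of_ae_support_subset {α : Type*} [MeasurableSpace α] {μ : Measure α}
    {f g : α → ℝ} (hf : 0 ≤ᵐ[μ] f) (hfi : Integrable f μ)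
    (hsupp : Function.support g ≤ᵐ[μ] Function.support f) (hg : 0 < ∫ x, g x ∂μ) :
    0 < ∫ x, f x ∂μ := by
  rw [integral_pos_iff_support_of_nonneg_ae hf hfi]
  refine lt_of_lt_of_le (pos_iff_ne_zero.2 fun h => hg.ne' ?_) (measure_mono_ae hsupp)
  exact integral_eq_zero_of_ae ((Measure.measure_support_eq_zero_iff μ).1 h)

lemma ae_mem_Ioo_restrict_Icc {a b : ℝ} : ∀ᵐ s ∂(volume.restrict (Icc a b)), s ∈ Ioo a b := by
  rw [← Measure.restrict_congr_set Ioo_ae_eq_Icc]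
  exact ae_restrict_mem measurableSet_Ioo

lemma isMinOn_of_deriv_nonpos_of_deriv_nonneg {f : ℝ → ℝ} {a c : ℝ} (hc : a < c)
    (hf : DifferentiableOn ℝ f (Ioi a)) (hneg : ∀ x ∈ Ioo a c, deriv f x ≤ 0)
    (hpos : ∀ x ∈ Ioi c, 0 ≤ deriv f x) : IsMinOn f (Ioi a) c := by
  intro q (hq : a < q)
  rcases le_total q c with hqc | hcq
  · have hsub : Icc q c ⊆ Ioi a := fun x hx => hq.trans_le hx.1
    refine antitoneOn_of_deriv_nonpos (convex_Icc q c) (hf.continuousOn.mono hsub)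
      (hf.mono (interior_subset.trans hsub)) (fun x hx => ?_) ⟨le_rfl, hqc⟩ ⟨hqc, le_rfl⟩ hqc
    rw [interior_Icc] at hx
    exact hneg x ⟨hq.trans hx.1, hx.2⟩
  · have hsub : Icc c q ⊆ Ioi a := fun x hx => hc.trans_le hx.1
    refine monotoneOn_of_deriv_nonneg (convex_Icc c q) (hf.continuousOn.mono hsub)
      (hf.mono (interior_subset.trans hsub)) (fun x hx => ?_) ⟨le_rfl, hcq⟩ ⟨hcq, le_rfl⟩ hcq
    rw [interior_Icc] at hx
    exact hpos x hx.1

noncomputable def logKernel (k : ℕ) (p s : ℝ) : ℝ :=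
  s ^ p * log s ^ k + (1 - s) ^ p * log (1 - s) ^ k

@[simp]
lemma logKernel_zero (p s : ℝ) : logKernel 0 p s = s ^ p + (1 - s) ^ p := by
  simp [logKernel]

@[fun_prop]
lemma measurable_logKernel (k : ℕ) (p : ℝ) : Measurable (logKernel k p) := by
  unfold logKernel
  fun_prop

lemma abs_logKernel_le {s δ t : ℝ} (k : ℕ) (hs : s ∈ Icc (0 : ℝ) 1) (hδ : 0 < δ)
    (hδt : δ ≤ t) : |logKernel k t s| ≤ 2 * (k / δ) ^ k := by
  have ht : 0 < t := hδ.trans_le hδt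
  have hkt : (k / t : ℝ) ^ k ≤ (k / δ) ^ k := by gcongr
  have h₁ := abs_rpow_mul_log_pow_le k hs.1 hs.2 ht
  have h₂ := abs_rpow_mul_log_pow_le k (sub_nonneg.2 hs.2) (by linarith [hs.1]) ht
  calc |logKernel k t s| ≤ (k / t) ^ k + (k / t) ^ k := (abs_add_le _ _).trans (add_le_add h₁ h₂)
    _ ≤ 2 * (k / δ) ^ k := by linarith

lemma hasDerivAt_logKernel {s t : ℝ} (k : ℕ) (hs : s ∈ Icc (0 : ℝ) 1) (ht : 0 < t) :
    HasDerivAt (fun p => logKernel k p s) (logKernel (k + 1) t s) t :=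
  (hasDerivAt_rpow_mul_log_pow k hs.1 ht).add
    (hasDerivAt_rpow_mul_log_pow k (sub_nonneg.2 hs.2) ht)

noncomputable def logMoment (G : ℝ → ℝ) (k : ℕ) (p : ℝ) : ℝ :=
  ∫ s in Icc (0 : ℝ) 1, G s * logKernel k p s

section

variable {G : ℝ → ℝ}

lemma logMoment_zero : logMoment G 0 = lamG G := by
  ext p
  simp [logMoment, lamG]

lemma integrableOn_mul_logKernel (hGint : IntegrableOn G (Icc 0 1)) (k : ℕ) {p : ℝ}
    (hp : 0 < p) : IntegrableOn (fun s => G s * logKernel k p s) (Icc 0 1) :=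
  hGint.mul_bdd (measurable_logKernel k p).aestronglyMeasurable
    (ae_restrict_of_forall_mem measurableSet_Icc fun _ hs => abs_logKernel_le k hs hp le_rfl)

lemma hasDerivAt_logMoment (hGint : IntegrableOn G (Icc 0 1)) (k : ℕ) {p : ℝ} (hp : 0 < p) :
    HasDerivAt (logMoment G k) (logMoment G (k + 1) p) p := by
  have hp₂ : 0 < p / 2 := half_pos hp
  have hball : ∀ t ∈ Metric.ball p (p / 2), p / 2 ≤ t := fun t ht => by
    rw [Metric.mem_ball, Real.dist_eq, abs_sub_lt_iff] at ht
    linarith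
  refine (hasDerivAt_integral_of_dominated_loc_of_deriv_le
    (μ := volume.restrict (Icc 0 1)) (F := fun t s => G s * logKernel k t s)
    (F' := fun t s => G s * logKernel (k + 1) t s)
    (bound := fun s => |G s| * (2 * ((k + 1 : ℕ) / (p / 2)) ^ (k + 1)))
    (Metric.ball_mem_nhds p hp₂) (Eventually.of_forall fun t => hGint.1.mul (by fun_prop))
    (integrableOn_mul_logKernel hGint k hp) (hGint.1.mul (by fun_prop)) ?_
    (hGint.abs.mul_const _) ?_).2
  · filter_upwards [ae_restrict_mem measurableSet_Icc] with s hs t ht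
    rw [norm_mul, Real.norm_eq_abs]
    exact mul_le_mul_of_nonneg_left
      (abs_logKernel_le (k + 1) hs hp₂ (hball t ht)) (abs_nonneg _)
  · filter_upwards [ae_restrict_mem measurableSet_Icc] with s hs t ht
    exact (hasDerivAt_logKernel k hs (hp₂.trans_le (hball t ht))).const_mul (G s)

lemma hasDerivAt_lamG (hGint : IntegrableOn G (Icc 0 1)) {p : ℝ} (hp : 0 < p) :
    HasDerivAt (lamG G) (logMoment G 1 p) p :=
  logMoment_zero (G := G) ▸ hasDerivAt_logMoment hGint 0 hp

lemma integrableOn_mul_rpow_add_rpow (hGint : IntegrableOn G (Icc 0 1)) {p : ℝ} (hp : 0 < p) :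
    IntegrableOn (fun s => G s * (s ^ p + (1 - s) ^ p)) (Icc 0 1) := by
  simpa using integrableOn_mul_logKernel hGint 0 hp

lemma lamG_sub_one (hGint : IntegrableOn G (Icc 0 1)) (hGnorm : ∫ s in Icc (0 : ℝ) 1, G s = 1)
    {p : ℝ} (hp : 0 < p) :
    lamG G p - 1 = ∫ s in Icc (0 : ℝ) 1, G s * (s ^ p + (1 - s) ^ p - 1) := by
  simp_rw [mul_sub, mul_one]
  rw [integral_sub (integrableOn_mul_rpow_add_rpow hGint hp) hGint, hGnorm, lamG]

lemma setIntegral_mul_pos_of_pos_on_Ioo (hGpos : ∀ s ∈ Icc (0 : ℝ) 1, 0 ≤ G s)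
    (hGnd : 0 < ∫ s in Icc (0 : ℝ) 1, G s * (s * (1 - s))) {φ : ℝ → ℝ}
    (hφi : IntegrableOn (fun s => G s * φ s) (Icc 0 1)) (hφ₀ : ∀ s ∈ Icc (0 : ℝ) 1, 0 ≤ φ s)
    (hφ : ∀ s ∈ Ioo (0 : ℝ) 1, 0 < φ s) : 0 < ∫ s in Icc (0 : ℝ) 1, G s * φ s := by
  refine integral_pos_of_ae_support_subset ?_ hφi ?_ hGnd
  · filter_upwards [ae_restrict_mem measurableSet_Icc] with s hs
    exact mul_nonneg (hGpos s hs) (hφ₀ s hs)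
  · filter_upwards [ae_mem_Ioo_restrict_Icc] with s hs hGs
    exact mul_ne_zero (left_ne_zero_of_mul hGs) (hφ s hs).ne'

lemma one_lt_lamG (hGpos : ∀ s ∈ Icc (0 : ℝ) 1, 0 ≤ G s) (hGint : IntegrableOn G (Icc 0 1))
    (hGnorm : ∫ s in Icc (0 : ℝ) 1, G s = 1)
    (hGnd : 0 < ∫ s in Icc (0 : ℝ) 1, G s * (s * (1 - s))) {p : ℝ} (hp₀ : 0 < p) (hp₁ : p < 1) :
    1 < lamG G p := by
  have hint := integrableOn_mul_rpow_add_rpow hGint hp₀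
  have key : 0 < ∫ s in Icc (0 : ℝ) 1, G s * (s ^ p + (1 - s) ^ p - 1) := by
    refine setIntegral_mul_pos_of_pos_on_Ioo hGpos hGnd ?_ ?_ ?_
    · exact (hint.sub hGint).congr_fun (fun s _ => by simp only [Pi.sub_apply]; ring)
        measurableSet_Icc
    · intro s ⟨hs₀, hs₁⟩
      linarith [self_le_rpow_of_le_one hs₀ hs₁ hp₁.le,
        self_le_rpow_of_le_one (sub_nonneg.2 hs₁) (by linarith) hp₁.le]
    · intro s ⟨hs₀, hs₁⟩
      linarith [self_lt_rpow_of_lt_one hs₀ hs₁ hp₁,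
        self_le_rpow_of_le_one (sub_nonneg.2 hs₁.le) (by linarith) hp₁.le]
  linarith [lamG_sub_one hGint hGnorm hp₀]

lemma lamG_lt_one (hGpos : ∀ s ∈ Icc (0 : ℝ) 1, 0 ≤ G s) (hGint : IntegrableOn G (Icc 0 1))
    (hGnorm : ∫ s in Icc (0 : ℝ) 1, G s = 1)
    (hGnd : 0 < ∫ s in Icc (0 : ℝ) 1, G s * (s * (1 - s))) {p : ℝ} (hp : 1 < p) :
    lamG G p < 1 := by
  have hp₀ : 0 < p := one_pos.trans hp
  have hint := integrableOn_mul_rpow_add_rpow hGint hp₀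
  have key : 0 < ∫ s in Icc (0 : ℝ) 1, G s * (1 - (s ^ p + (1 - s) ^ p)) := by
    refine setIntegral_mul_pos_of_pos_on_Ioo hGpos hGnd ?_ ?_ ?_
    · exact (hGint.sub hint).congr_fun (fun s _ => by simp only [Pi.sub_apply]; ring)
        measurableSet_Icc
    · intro s ⟨hs₀, hs₁⟩
      linarith [rpow_le_self_of_le_one hs₀ hs₁ hp.le,
        rpow_le_self_of_le_one (sub_nonneg.2 hs₁) (by linarith) hp.le]
    · intro s ⟨hs₀, hs₁⟩
      linarith [rpow_lt_self_of_lt_one hs₀ hs₁ hp,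
        rpow_le_self_of_le_one (sub_nonneg.2 hs₁.le) (by linarith) hp.le]
  have hneg : ∀ s : ℝ, G s * (1 - (s ^ p + (1 - s) ^ p)) = -(G s * (s ^ p + (1 - s) ^ p - 1)) :=
    fun s => by ring
  simp_rw [hneg, integral_neg] at key
  linarith [lamG_sub_one hGint hGnorm hp₀]

lemma muG_natCast_eq (hGint : IntegrableOn G (Icc 0 1)) (hGnorm : ∫ s in Icc (0 : ℝ) 1, G s = 1)
    {n : ℕ} (hn : n ≠ 0) {c : ℝ} (h : ∀ s : ℝ, s ^ n + (1 - s) ^ n - 1 = n * c * (s * (1 - s))) :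
    muG G n = c * ∫ s in Icc (0 : ℝ) 1, G s * (s * (1 - s)) := by
  have hn' : (0 : ℝ) < n := by positivity
  rw [muG, lamG_sub_one hGint hGnorm hn']
  simp_rw [rpow_natCast, h, mul_left_comm (G _), integral_const_mul]
  field_simp

lemma tendsto_lamG {l : Filter ℝ} [l.IsCountablyGenerated] (hGint : IntegrableOn G (Icc 0 1))
    (hGnorm : ∫ s in Icc (0 : ℝ) 1, G s = 1) (hl : ∀ᶠ p in l, 0 < p) {c : ℝ}
    (hc : ∀ s ∈ Ioo (0 : ℝ) 1, Tendsto (fun p => s ^ p) l (𝓝 c)) :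
    Tendsto (lamG G) l (𝓝 (2 * c)) := by
  have hlim : ∫ s in Icc (0 : ℝ) 1, G s * (c + c) = 2 * c := by
    rw [integral_mul_const, hGnorm]
    ring
  rw [← hlim]
  refine tendsto_integral_filter_of_dominated_convergence (fun s => |G s| * 2) ?_ ?_
    (hGint.abs.mul_const 2) ?_
  · filter_upwards [hl] with p hp
    exact (integrableOn_mul_rpow_add_rpow hGint hp).1
  · filter_upwards [hl] with p hp
    filter_upwards [ae_restrict_mem measurableSet_Icc] with s hs
    rw [norm_mul, Real.norm_eq_abs]
    simpa using mul_le_mul_of_nonneg_left (abs_logKernel_le 0 hs hp le_rfl) (abs_nonneg (G s))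
  · filter_upwards [ae_mem_Ioo_restrict_Icc] with s ⟨hs₀, hs₁⟩
    exact ((hc s ⟨hs₀, hs₁⟩).add (hc (1 - s) ⟨by linarith, by linarith⟩)).const_mul (G s)

lemma tendsto_mul_muG_nhdsGT_zero (hGint : IntegrableOn G (Icc 0 1))
    (hGnorm : ∫ s in Icc (0 : ℝ) 1, G s = 1) :
    Tendsto (fun p => p * muG G p) (𝓝[>] 0) (𝓝 1) := by
  have hlam : Tendsto (lamG G) (𝓝[>] 0) (𝓝 (2 * 1)) :=
    tendsto_lamG hGint hGnorm self_mem_nhdsWithin fun s hs => by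
      simpa using ((continuousAt_const_rpow hs.1.ne').tendsto (x := 0)).mono_left
        nhdsWithin_le_nhds
  have hlam₁ := hlam.sub_const 1
  norm_num at hlam₁
  refine hlam₁.congr' ?_
  filter_upwards [self_mem_nhdsWithin] with p hp
  rw [muG, mul_div_cancel₀ _ (ne_of_gt hp)]

lemma tendsto_muG_atTop (hGint : IntegrableOn G (Icc 0 1))
    (hGnorm : ∫ s in Icc (0 : ℝ) 1, G s = 1) : Tendsto (muG G) atTop (𝓝 0) := by
  have hlam : Tendsto (lamG G) atTop (𝓝 (2 * 0)) :=
    tendsto_lamG hGint hGnorm (eventually_gt_atTop 0) fun s hs =>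
      tendsto_rpow_atTop_of_base_lt_one s (by linarith [hs.1]) hs.2
  show Tendsto (fun p => (lamG G p - 1) / p) atTop (𝓝 0)
  simpa [div_eq_mul_inv] using (hlam.sub_const 1).mul tendsto_inv_atTop_zero

lemma logMoment_two_pos (hGpos : ∀ s ∈ Icc (0 : ℝ) 1, 0 ≤ G s) (hGint : IntegrableOn G (Icc 0 1))
    (hGnd : 0 < ∫ s in Icc (0 : ℝ) 1, G s * (s * (1 - s))) {p : ℝ} (hp : 0 < p) :
    0 < logMoment G 2 p := by
  refine setIntegral_mul_pos_of_pos_on_Ioo hGpos hGnd (integrableOn_mul_logKernel hGint 2 hp)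
    (fun s hs => ?_) (fun s hs => ?_) <;> unfold logKernel
  · have := rpow_nonneg hs.1 p
    have := rpow_nonneg (sub_nonneg.2 hs.2) p
    positivity
  · have := rpow_nonneg (sub_nonneg.2 hs.2.le) p
    exact add_pos_of_pos_of_nonneg
      (mul_pos (rpow_pos_of_pos hs.1 p) (even_two.pow_pos (log_neg hs.1 hs.2).ne)) (by positivity)

lemma hasDerivAt_muG (hGint : IntegrableOn G (Icc 0 1)) {p : ℝ} (hp : 0 < p) :
    HasDerivAt (muG G) ((p * logMoment G 1 p - (lamG G p - 1)) / p ^ 2) p :=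
  (((hasDerivAt_lamG hGint hp).sub_const 1).div (hasDerivAt_id' p) hp.ne').congr_deriv (by ring)

lemma differentiableOn_muG (hGint : IntegrableOn G (Icc 0 1)) :
    DifferentiableOn ℝ (muG G) (Ioi 0) :=
  fun _ hp => (hasDerivAt_muG hGint hp).differentiableAt.differentiableWithinAt

lemma strictMonoOn_sq_mul_deriv_muG (hGpos : ∀ s ∈ Icc (0 : ℝ) 1, 0 ≤ G s)
    (hGint : IntegrableOn G (Icc 0 1)) (hGnd : 0 < ∫ s in Icc (0 : ℝ) 1, G s * (s * (1 - s))) :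
    StrictMonoOn (fun p => p ^ 2 * deriv (muG G) p) (Ioi 0) := by
  have hψ : ∀ p ∈ Ioi (0 : ℝ), HasDerivAt (fun p => p * logMoment G 1 p - (lamG G p - 1))
      (p * logMoment G 2 p) p := fun p hp =>
    (((hasDerivAt_id' p).mul (hasDerivAt_logMoment hGint 1 hp)).sub
      ((hasDerivAt_lamG hGint hp).sub_const 1)).congr_deriv (by ring)
  refine StrictMonoOn.congr (strictMonoOn_of_deriv_pos (convex_Ioi 0)
    (fun p hp => (hψ p hp).continuousAt.continuousWithinAt) fun p hp => ?_) fun p hp => ?_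
  · rw [interior_Ioi] at hp
    rw [(hψ p hp).deriv]
    exact mul_pos hp (logMoment_two_pos hGpos hGint hGnd hp)
  · rw [(hasDerivAt_muG hGint hp).deriv]
    field_simp [(ne_of_gt hp : p ≠ 0)]

lemma isMinOn_muG_of_deriv_eq_zero (hGpos : ∀ s ∈ Icc (0 : ℝ) 1, 0 ≤ G s)
    (hGint : IntegrableOn G (Icc 0 1)) (hGnd : 0 < ∫ s in Icc (0 : ℝ) 1, G s * (s * (1 - s)))
    {c : ℝ} (hc : 0 < c) (hc₀ : deriv (muG G) c = 0) : IsMinOn (muG G) (Ioi 0) c := by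
  have hmono := strictMonoOn_sq_mul_deriv_muG hGpos hGint hGnd
  refine isMinOn_of_deriv_nonpos_of_deriv_nonneg hc (differentiableOn_muG hGint)
    (fun x hx => ?_) (fun x hx => ?_)
  · have := hmono hx.1 hc hx.2
    simp only [hc₀, mul_zero] at this
    exact (neg_of_mul_neg_right this (sq_nonneg x)).le
  · have hx₀ : (0 : ℝ) < x := hc.trans hx
    have := hmono hc hx₀ hx
    simp only [hc₀, mul_zero] at this
    exact (pos_of_mul_pos_right this (sq_nonneg x)).le

end

theorem stmt_19 (G : ℝ → ℝ)
    (hGpos : ∀ s ∈ Set.Icc (0 : ℝ) 1, 0 ≤ G s)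
    (hGint : IntegrableOn G (Set.Icc (0 : ℝ) 1))
    (hGnorm : ∫ s in Set.Icc (0 : ℝ) 1, G s = 1)
    (hGnd : 0 < ∫ s in Set.Icc (0 : ℝ) 1, G s * (s * (1 - s))) :
    -- p μ(p) → 1 as p → 0⁺
    Tendsto (fun p : ℝ => p * muG G p) (nhdsWithin 0 (Set.Ioi 0)) (nhds 1) ∧
    -- μ(p) → 0 as p → ∞
    Tendsto (muG G) atTop (nhds 0) ∧
    -- μ > 0 on (0,1), μ(1) = 0, μ < 0 on (1,∞)
    (∀ p : ℝ, 0 < p → p < 1 → 0 < muG G p) ∧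
    muG G 1 = 0 ∧
    (∀ p : ℝ, 1 < p → muG G p < 0) ∧
    -- μ(2) = μ(3) = −∫₀¹ G(s) s(1−s) ds
    muG G 2 = -∫ s in Set.Icc (0 : ℝ) 1, G s * (s * (1 - s)) ∧
    muG G 3 = -∫ s in Set.Icc (0 : ℝ) 1, G s * (s * (1 - s)) ∧
    -- the unique critical point p₀, the global minimum point of μ, lies in (2,3)
    (∃ p₀ : ℝ, 2 < p₀ ∧ p₀ < 3 ∧ deriv (muG G) p₀ = 0 ∧
      (∀ q : ℝ, 0 < q → deriv (muG G) q = 0 → q = p₀) ∧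
      (∀ q : ℝ, 0 < q → muG G p₀ ≤ muG G q)) := by
  have hmu₁ : muG G 1 = 0 := by
    simpa using muG_natCast_eq hGint hGnorm one_ne_zero (c := 0) fun s => by ring
  have hmu₂ : muG G 2 = -∫ s in Icc (0 : ℝ) 1, G s * (s * (1 - s)) := by
    simpa using muG_natCast_eq hGint hGnorm two_ne_zero (c := -1) fun s => by push_cast; ring
  have hmu₃ : muG G 3 = -∫ s in Icc (0 : ℝ) 1, G s * (s * (1 - s)) := by
    simpa using muG_natCast_eq hGint hGnorm three_ne_zero (c := -1) fun s => by push_cast; ring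
  obtain ⟨c, ⟨h2c, hc3⟩, hc⟩ := exists_deriv_eq_zero (by norm_num : (2 : ℝ) < 3)
    ((differentiableOn_muG hGint).continuousOn.mono fun x hx => by
      simp only [mem_Ioi]; linarith [hx.1]) (hmu₂.trans hmu₃.symm)
  have hc₀ : 0 < c := by linarith
  refine ⟨tendsto_mul_muG_nhdsGT_zero hGint hGnorm, tendsto_muG_atTop hGint hGnorm,
    fun p hp₀ hp₁ => div_pos (sub_pos.2 (one_lt_lamG hGpos hGint hGnorm hGnd hp₀ hp₁)) hp₀,
    hmu₁, fun p hp => div_neg_of_neg_of_pos (sub_neg.2 (lamG_lt_one hGpos hGint hGnorm hGnd hp))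
      (one_pos.trans hp), hmu₂, hmu₃, c, h2c, hc3, hc, fun q hq hq₀ => ?_,
    fun q hq => isMinOn_muG_of_deriv_eq_zero hGpos hGint hGnd hc₀ hc hq⟩
  exact (strictMonoOn_sq_mul_deriv_muG hGpos hGint hGnd).injOn hq hc₀ (by simp [hq₀, hc])
end
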